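/- arXiv:1005.2148 — 10 statements merged into one kernel-verified Lean document; each statement's English description precedes it below -/
import Mathlib

section
/- In any n-ary group (G,f), for all x ∈ G and all 1 ≤ k ≤ n, f(x,...,x, x̄, x,...,x) = x, where x̄ is at position k and x appears in all other n−1 positions. -/
namespace NAry

variable {G : Type*} {A : Type*}

/-- One of the ways to compose two applications of an `n`-ary operation on
`2n-1` arguments: the inner application starts at position `i`. -/
def Comp (n : ℕ) (f : (ℕ → G) → G) (x : ℕ → G) (i : ℕ) : G :=
  f (fun k => if k < i then x k else if k = i then f (fun m => x (i + m)) else x (k + n - 1))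

/-- `f` depends only on its first `n` arguments. -/
def DepOn (n : ℕ) (f : (ℕ → G) → G) : Prop :=
  ∀ x y : ℕ → G, (∀ k < n, x k = y k) → f x = f y

/-- Associativity of an `n`-ary operation. -/
def Assoc (n : ℕ) (f : (ℕ → G) → G) : Prop :=
  ∀ (x : ℕ → G) (i j : ℕ), i < n → j < n → Comp n f x i = Comp n f x j

/-- Unique solvability at every place `i < n`. -/
def Solvable (n : ℕ) (f : (ℕ → G) → G) : Prop :=
  ∀ i < n, ∀ (x : ℕ → G) (x₀ : G), ∃! z : G, f (Function.update x i z) = x₀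

/-- `(G, f)` is an `n`-ary (polyadic) group. -/
def IsNAryGroup (n : ℕ) (f : (ℕ → G) → G) : Prop :=
  DepOn n f ∧ Assoc n f ∧ Solvable n f

/-- `sx` is the skew element of `x`: `f(x,…,x,sx) = x` with `n-1` copies of `x`. -/
def IsSkew (n : ℕ) (f : (ℕ → G) → G) (x sx : G) : Prop :=
  f (Function.update (fun _ => x) (n - 1) sx) = x

/-- An action of the `n`-ary group `(G,f)` on a set `A`. -/
def IsAction (n : ℕ) (f : (ℕ → G) → G) (act : G → A → A) : Prop :=
  (∀ (x : ℕ → G) (a : A), act (f x) a = (List.range n).foldr (fun i b => act (x i) b) a)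
  ∧ (∀ a : A, ∃ x : G, act x a = a)
  ∧ (∀ x : G, Function.Bijective (act x))

end NAry

open NAry

/-!
Place `sx` at position `n-1+p` in a word of `2n-1` copies of `x`. Bracketing the block that starts
at `p` gives `f(x,…,x)` by the defining property of `sx`; bracketing the block that starts at `n-1`
gives `f(x,…,x,u)` with `u = f(x,…,sx,…,x)`, `sx` at position `p`. Associativity equates the two,
and cancellation in the last place yields `u = x`.
-/

namespace NAry

variable {G : Type*} {n : ℕ} {f : (ℕ → G) → G}

theorem comp_update_const (x y : G) {i m : ℕ} (him : i ≤ m) (hmi : m < i + n) :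
    Comp n f (Function.update (fun _ => x) m y) i =
      f (Function.update (fun _ => x) i (f (Function.update (fun _ => x) (m - i) y))) := by
  have inner : (fun j => Function.update (fun _ => x) m y (i + j)) =
      Function.update (fun _ => x) (m - i) y := by
    funext j
    simp only [Function.update_apply]
    congr 1
    exact propext (by omega)
  unfold Comp
  rw [inner]
  congr 1
  funext k
  simp only [Function.update_apply]
  split_ifs <;> first | rfl | omega

theorem Solvable.update_injective (hsolv : Solvable n f) {i : ℕ} (hi : i < n) (x : ℕ → G) :
    Function.Injective fun z => f (Function.update x i z) := by
  intro a b hab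
  exact (hsolv i hi x _).unique hab rfl

theorem IsSkew.apply_update_eq (hassoc : Assoc n f) (hsolv : Solvable n f) {x sx : G}
    (hs : IsSkew n f x sx) {p : ℕ} (hp : p < n) :
    f (Function.update (fun _ => x) p sx) = x := by
  have hn : n - 1 < n := by omega
  have key := hassoc (Function.update (fun _ => x) (n - 1 + p) sx) (n - 1) p hn hp
  rw [comp_update_const x sx (by omega) (by omega), comp_update_const x sx (by omega) (by omega),
    Nat.add_sub_cancel_left, Nat.add_sub_cancel, hs, Function.update_eq_self] at key
  refine hsolv.update_injective hn (fun _ => x) ?_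
  simpa only [Function.update_eq_self] using key

end NAry

theorem skew_identity_general {G : Type*} (n : ℕ) (f : (ℕ → G) → G)
    (hG : IsNAryGroup n f) (x sx : G) (hs : IsSkew n f x sx)
    (k : ℕ) (hk : 1 ≤ k) (hkn : k ≤ n) :
    f (Function.update (fun _ => x) (k - 1) sx) = x :=
  hs.apply_update_eq hG.2.1 hG.2.2 (by omega)

theorem skew_identity {G : Type*} (n : ℕ) (hn : 3 ≤ n) (f : (ℕ → G) → G)
    (hG : IsNAryGroup n f) (x sx : G) (hs : IsSkew n f x sx)
    (k : ℕ) (hk : 1 ≤ k) (hkn : k ≤ n) :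
    f (Function.update (fun _ => x) (k - 1) sx) = x :=
  skew_identity_general n f hG x sx hs k hk hkn
end

section
/- Any two retracts Ret_a(G,f) and Ret_b(G,f) of a fixed n-ary group (G,f) are isomorphic as groups; in particular the map h(x) = f(e,...,e, x, p̄) (with n−2 copies of e) is an isomorphism from Ret_e(G) to Ret_p(G). -/
open NAry

/-! Write `h x = f(e, …, e, x, p̄)`. Moving brackets with associativity gives
`h (x ∗ₑ y) = f(e, …, e, x, h y)` and `h x ∗ₚ z = f(e, …, e, x, p̄ ∗ₚ z)`, and `p̄ ∗ₚ z = z` because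
`p̄` is a left identity of `Ret_p(G)` (again by moving brackets, then cancelling). Bijectivity of `h`
is unique solvability at the place of `x`. -/

namespace NAry

variable {G : Type*} {n : ℕ} {f : (ℕ → G) → G}

theorem Solvable.bijective_update (hsol : Solvable n f) {i : ℕ} (hi : i < n) (x : ℕ → G) :
    Function.Bijective fun z => f (Function.update x i z) :=
  (Function.bijective_iff_existsUnique _).2 (hsol i hi x)

/-- `t` and `u` are the bracketings of the word `s` at positions `i` and `j`, with the inner
applications already evaluated to `c` and `d`. -/
theorem Assoc.apply_eq (hdep : DepOn n f) (hassoc : Assoc n f) {s : ℕ → G} {i j : ℕ}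
    (hi : i < n) (hj : j < n) {c d : G} {t u : ℕ → G}
    (hc : f (fun m => s (i + m)) = c) (hd : f (fun m => s (j + m)) = d)
    (ht : ∀ k < n, t k = if k < i then s k else if k = i then c else s (k + n - 1))
    (hu : ∀ k < n, u k = if k < j then s k else if k = j then d else s (k + n - 1)) :
    f t = f u := by
  have comp_eq : ∀ {i : ℕ} {c : G} {t : ℕ → G}, f (fun m => s (i + m)) = c →
      (∀ k < n, t k = if k < i then s k else if k = i then c else s (k + n - 1)) →
      Comp n f s i = f t := by
    intro i c t hc ht
    refine hdep _ _ fun k hk => ?_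
    rw [ht k hk, hc]
  rw [← comp_eq hc ht, ← comp_eq hd hu]
  exact hassoc s i j hi hj

/-- The binary operation `x ∗ y = f(x, a, …, a, y)` of the retract `Ret_a(G)`. -/
def retractMul (n : ℕ) (f : (ℕ → G) → G) (a x y : G) : G :=
  f fun k => if k = 0 then x else if k = n - 1 then y else a

/-- `retractHom n f e w x = f(e, …, e, x, w)`; with `w` the skew element of `p` it is the
isomorphism `Ret_e(G) → Ret_p(G)`. -/
def retractHom (n : ℕ) (f : (ℕ → G) → G) (e w x : G) : G :=
  f fun k => if k = n - 2 then x else if k = n - 1 then w else e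

theorem bijective_retractHom (hn : 2 ≤ n) (hsol : Solvable n f) (e w : G) :
    Function.Bijective (retractHom n f e w) := by
  convert hsol.bijective_update (by omega : n - 2 < n) (fun k => if k = n - 1 then w else e)
    using 1
  exact funext fun x => congrArg f (funext fun k => by rw [Function.update_apply])

theorem IsSkew.retractMul_left_id (hn : 2 ≤ n) (hG : IsNAryGroup n f) {a sa : G}
    (hsa : IsSkew n f a sa) (z : G) : retractMul n f a sa z = z := by
  obtain ⟨hdep, hassoc, hsol⟩ := hG
  -- bracket the word `(a, …, a, sa, a, …, a, z)` at `0` and at `n - 1`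
  have key : f (Function.update (fun _ => a) (n - 1) z) =
      f (Function.update (fun _ => a) (n - 1) (retractMul n f a sa z)) := by
    refine hassoc.apply_eq hdep
      (s := fun k => if k = n - 1 then sa else if k = 2 * n - 2 then z else a)
      (c := a) (d := retractMul n f a sa z) (by omega : 0 < n) (by omega : n - 1 < n)
      ((hdep _ _ fun k hk => ?_).trans hsa) (hdep _ _ fun k hk => ?_) (fun k hk => ?_)
      (fun k hk => ?_)
    all_goals
      simp -failIfUnchanged only [Function.update_apply]
      split_ifs <;> first | rfl | omega
  exact ((hsol.bijective_update (by omega) _).1 key).symm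

theorem retractHom_retractMul (hn : 2 ≤ n) (hdep : DepOn n f) (hassoc : Assoc n f)
    (e w x y : G) :
    retractHom n f e w (retractMul n f e x y) = retractHom n f e (retractHom n f e w y) x := by
  -- bracket the word `(e, …, e, x, e, …, e, y, w)` at `n - 2` and at `n - 1`
  refine hassoc.apply_eq hdep
    (s := fun k => if k = n - 2 then x else if k = 2 * n - 3 then y else if k = 2 * n - 2 then w
      else e)
    (c := retractMul n f e x y) (d := retractHom n f e w y) (by omega : n - 2 < n)
    (by omega : n - 1 < n) (hdep _ _ fun k hk => ?_) (hdep _ _ fun k hk => ?_) (fun k hk => ?_)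
    (fun k hk => ?_)
  all_goals split_ifs <;> first | rfl | omega

theorem retractMul_retractHom (hn : 2 ≤ n) (hdep : DepOn n f) (hassoc : Assoc n f)
    (e p w x z : G) :
    retractMul n f p (retractHom n f e w x) z = retractHom n f e (retractMul n f p w z) x := by
  -- bracket the word `(e, …, e, x, w, p, …, p, z)` at `0` and at `n - 1`
  refine hassoc.apply_eq hdep
    (s := fun k => if k < n - 2 then e else if k = n - 2 then x else if k = n - 1 then w
      else if k = 2 * n - 2 then z else p)
    (c := retractHom n f e w x) (d := retractMul n f p w z) (by omega : 0 < n)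
    (by omega : n - 1 < n) (hdep _ _ fun k hk => ?_) (hdep _ _ fun k hk => ?_) (fun k hk => ?_)
    (fun k hk => ?_)
  all_goals split_ifs <;> first | rfl | omega

end NAry

theorem retracts_isomorphic {G : Type*} (n : ℕ) (hn : 3 ≤ n) (f : (ℕ → G) → G)
    (hG : IsNAryGroup n f) (e p : G) (sk : G → G) (hsk : ∀ x, IsSkew n f x (sk x)) :
    let opE : G → G → G := fun x y => f (fun k => if k = 0 then x else if k = n - 1 then y else e)
    let opP : G → G → G := fun x y => f (fun k => if k = 0 then x else if k = n - 1 then y else p)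
    let h : G → G := fun x => f (fun k => if k = n - 2 then x else if k = n - 1 then sk p else e)
    Function.Bijective h ∧ ∀ x y, h (opE x y) = opP (h x) (h y) := by
  obtain ⟨hdep, hassoc, hsol⟩ := id hG
  refine ⟨bijective_retractHom (by omega) hsol e (sk p), fun x y => ?_⟩
  change retractHom n f e (sk p) (retractMul n f e x y) =
    retractMul n f p (retractHom n f e (sk p) x) (retractHom n f e (sk p) y)
  rw [retractHom_retractMul (by omega) hdep hassoc, retractMul_retractHom (by omega) hdep hassoc,
    (hsk p).retractMul_left_id (by omega) hG]
end

section
/- A semiabelian n-ary group is medial: if there exists a ∈ G with f(x,a,...,a,y) = f(y,a,...,a,x) for all x,y (equivalently, f(x_1,...,x_n) = f(x_n,x_2,...,x_{n-1},x_1) holds identically), then f(f(x_{11},...,x_{1n}), ..., f(x_{n1},...,x_{nn})) = f(f(x_{11},...,x_{n1}), ..., f(x_{1n},...,x_{nn})) for any n×n matrix of elements (x_{ij}). -/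
open NAry

/-!
Let `nest n f k` be the left-nested composition of `k + 1` copies of `f`, a function of
`n + k (n - 1)` arguments. By general associativity any window of `n` consecutive arguments
may be evaluated first, and inside such a window the semiabelian identity exchanges its two
ends. Hence `nest` is invariant under the transposition of two positions at distance `n - 1`,
so under every transposition of positions congruent mod `n - 1`, and so under every finitely
supported permutation preserving positions mod `n - 1`. Both sides of the medial identity are
`nest n f n` of the matrix read row by row, resp. column by column, and the transposition
`i n + j ↦ j n + i` of positions preserves residues mod `n - 1` because `n ≡ 1`.
-/

open Equiv

lemma Nat.mul_add_div_of_lt {n i j : ℕ} (hj : j < n) : (i * n + j) / n = i := by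
  rw [Nat.add_comm, Nat.add_mul_div_right _ _ (by omega), Nat.div_eq_of_lt hj, zero_add]

lemma Nat.exists_mul_add_of_lt_mul_self {n m : ℕ} (hm : m < n * n) :
    ∃ i < n, ∃ j < n, m = i * n + j := by
  have hn : 0 < n := Nat.pos_of_ne_zero (by rintro rfl; simp at hm)
  exact ⟨m / n, Nat.div_lt_of_lt_mul hm, m % n, Nat.mod_lt _ hn, (Nat.div_add_mod' m n).symm⟩

/-- Transposition of an `n × n` array stored row by row, entry `(i, j)` at position `i * n + j`. -/
def transposeIdx (n m : ℕ) : ℕ := if m < n * n then m % n * n + m / n else m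

lemma transposeIdx_mul_add {n i j : ℕ} (hi : i < n) (hj : j < n) :
    transposeIdx n (i * n + j) = j * n + i := by
  have hlt : i * n + j < n * n := by nlinarith
  simp only [transposeIdx, if_pos hlt, Nat.mul_add_mod_of_lt hj, Nat.mul_add_div_of_lt hj]

lemma transposeIdx_involutive (n : ℕ) : Function.Involutive (transposeIdx n) := by
  intro m
  by_cases hm : m < n * n
  · obtain ⟨i, hi, j, hj, rfl⟩ := Nat.exists_mul_add_of_lt_mul_self hm
    rw [transposeIdx_mul_add hi hj, transposeIdx_mul_add hj hi]
  · simp [transposeIdx, hm]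

lemma transposeIdx_modEq (n m : ℕ) : transposeIdx n m ≡ m [MOD n - 1] := by
  by_cases hm : m < n * n
  · obtain ⟨i, hi, j, hj, rfl⟩ := Nat.exists_mul_add_of_lt_mul_self hm
    have hn : n ≡ 1 [MOD n - 1] := Nat.modEq_sub (by omega)
    have key : ∀ a b, a * n + b ≡ a + b [MOD n - 1] := fun a b => by
      simpa using (hn.mul_left a).add_right b
    rw [transposeIdx_mul_add hi hj]
    exact (key j i).trans (add_comm j i ▸ (key i j).symm)
  · simp [transposeIdx, hm, Nat.ModEq.refl]

namespace NAry

variable {G : Type*} {n : ℕ} {f : (ℕ → G) → G}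

/-- Replaces the window `x i, …, x (i + n - 1)` by `f` of it, so that
`Comp n f x i = f (contract n f i x)`. -/
def contract (n : ℕ) (f : (ℕ → G) → G) (i : ℕ) (x : ℕ → G) : ℕ → G :=
  fun k => if k < i then x k else if k = i then f (fun m => x (i + m)) else x (k + n - 1)

lemma contract_of_lt {i k : ℕ} (h : k < i) (x : ℕ → G) : contract n f i x k = x k := by
  simp [contract, h]

lemma contract_self (i : ℕ) (x : ℕ → G) : contract n f i x i = f (fun m => x (i + m)) := by
  simp [contract]

lemma contract_of_gt {i k : ℕ} (h : i < k) (x : ℕ → G) :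
    contract n f i x k = x (k + n - 1) := by
  simp [contract, h.not_gt, h.ne']

lemma contract_zero_contract_of_lt (ha : Assoc n f) {p : ℕ} (hp : p < n) (x : ℕ → G) :
    contract n f 0 (contract n f p x) = contract n f 0 (contract n f 0 x) := by
  funext j
  rcases Nat.eq_zero_or_pos j with rfl | hj
  · simp only [contract_self, zero_add]
    exact ha x p 0 hp (by omega)
  · rw [contract_of_gt hj, contract_of_gt hj, contract_of_gt (by omega : p < j + n - 1),
      contract_of_gt (by omega : 0 < j + n - 1)]

lemma contract_contract_zero (hdep : DepOn n f) (hn : 1 ≤ n) {p : ℕ} (hp : 1 ≤ p) (x : ℕ → G) :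
    contract n f p (contract n f 0 x) = contract n f 0 (contract n f (p + (n - 1)) x) := by
  funext j
  rcases Nat.lt_trichotomy j p with h | rfl | h
  · rw [contract_of_lt h]
    rcases Nat.eq_zero_or_pos j with rfl | hj
    · simp only [contract_self]
      exact hdep _ _ fun m hm => (contract_of_lt (by omega) x).symm
    · rw [contract_of_gt hj, contract_of_gt hj, contract_of_lt (by omega)]
  · rw [contract_self, contract_of_gt (show 0 < j by omega),
      show j + n - 1 = j + (n - 1) by omega, contract_self]
    congr 1
    funext m
    rw [contract_of_gt (show 0 < j + m by omega)]
    congr 1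
    omega
  · rw [contract_of_gt h, contract_of_gt (show 0 < j by omega),
      contract_of_gt (show 0 < j + n - 1 by omega),
      contract_of_gt (show p + (n - 1) < j + n - 1 by omega)]

def nest (n : ℕ) (f : (ℕ → G) → G) : ℕ → (ℕ → G) → G
  | 0 => f
  | k + 1 => fun x => nest n f k (contract n f 0 x)

lemma nest_succ_eq_nest_contract (hdep : DepOn n f) (ha : Assoc n f) (hn : 1 ≤ n) (k : ℕ)
    {p : ℕ} (hp : p ≤ (k + 1) * (n - 1)) (x : ℕ → G) :
    nest n f (k + 1) x = nest n f k (contract n f p x) := by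
  induction k generalizing p x with
  | zero => exact ha x 0 p (by omega) (by omega)
  | succ k ih =>
    rcases Nat.lt_or_ge p n with hpn | hpn
    · show nest n f k (contract n f 0 (contract n f 0 x)) = _
      rw [← contract_zero_contract_of_lt ha hpn]
      rfl
    · obtain ⟨q, rfl⟩ : ∃ q, p = q + (n - 1) := ⟨p - (n - 1), by omega⟩
      have hq : q ≤ (k + 1) * (n - 1) := by rw [add_mul] at hp; omega
      calc nest n f (k + 1 + 1) x = nest n f k (contract n f q (contract n f 0 x)) :=
            ih hq (contract n f 0 x)
        _ = nest n f (k + 1) (contract n f (q + (n - 1)) x) := by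
            rw [contract_contract_zero hdep hn (by omega)]
            rfl

def nestStabilizer (n : ℕ) (f : (ℕ → G) → G) (k : ℕ) : Subgroup (Perm ℕ) where
  carrier := {σ | ∀ x : ℕ → G, nest n f k (x ∘ σ) = nest n f k x}
  mul_mem' {σ τ} hσ hτ x := by
    rw [Perm.coe_mul, ← Function.comp_assoc, hτ, hσ]
  one_mem' _ := rfl
  inv_mem' {σ} hσ x := by
    rw [← hσ (x ∘ ⇑σ⁻¹), Function.comp_assoc, ← Perm.coe_mul, inv_mul_cancel, Perm.coe_one,
      Function.comp_id]

lemma contract_comp_swap (hsemi : ∀ x : ℕ → G, f (x ∘ swap 0 (n - 1)) = f x) (hn : 1 ≤ n)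
    (p : ℕ) (x : ℕ → G) :
    contract n f p (x ∘ swap p (p + (n - 1))) = contract n f p x := by
  funext j
  rcases Nat.lt_trichotomy j p with h | rfl | h
  · rw [contract_of_lt h, contract_of_lt h, Function.comp_apply,
      swap_apply_of_ne_of_ne (by omega) (by omega)]
  · rw [contract_self, contract_self]
    conv_rhs => rw [← hsemi]
    congr 1
    funext m
    simp only [Function.comp_apply]
    rw [← (add_right_injective j).swap_apply, add_zero]
  · rw [contract_of_gt h, contract_of_gt h, Function.comp_apply,
      swap_apply_of_ne_of_ne (by omega) (by omega)]

lemma swap_add_mem_nestStabilizer (hdep : DepOn n f) (ha : Assoc n f)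
    (hsemi : ∀ x : ℕ → G, f (x ∘ swap 0 (n - 1)) = f x) (hn : 1 ≤ n) {k p : ℕ}
    (hp : p ≤ k * (n - 1)) : swap p (p + (n - 1)) ∈ nestStabilizer n f k := by
  intro x
  cases k with
  | zero =>
    obtain rfl : p = 0 := by omega
    rw [zero_add]
    exact hsemi x
  | succ k =>
    rw [nest_succ_eq_nest_contract hdep ha hn k hp, nest_succ_eq_nest_contract hdep ha hn k hp,
      contract_comp_swap hsemi hn]

lemma swap_mem_nestStabilizer (hdep : DepOn n f) (ha : Assoc n f)
    (hsemi : ∀ x : ℕ → G, f (x ∘ swap 0 (n - 1)) = f x) (hn : 1 ≤ n) {k p q : ℕ}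
    (hp : p < n + k * (n - 1)) (hq : q < n + k * (n - 1)) (hpq : p ≡ q [MOD n - 1]) :
    swap p q ∈ nestStabilizer n f k := by
  wlog hle : p ≤ q generalizing p q
  · rw [swap_comm]
    exact this hq hp hpq.symm (by omega)
  obtain ⟨d, hd⟩ := (Nat.modEq_iff_dvd' hle).mp hpq
  obtain rfl : q = p + d * (n - 1) := by rw [mul_comm]; omega
  clear hpq hle hd
  induction d generalizing p with
  | zero =>
    rw [zero_mul, add_zero, swap_self]
    exact (nestStabilizer n f k).one_mem
  | succ d ih =>
    rw [add_mul, one_mul] at hq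
    refine SubmonoidClass.swap_mem_trans _ (swap_add_mem_nestStabilizer hdep ha hsemi hn ?_) ?_
    · omega
    · rw [add_comm d 1, add_mul, one_mul, ← add_assoc]
      exact ih (by omega) (by omega)

lemma mem_nestStabilizer_of_modEq (hdep : DepOn n f) (ha : Assoc n f)
    (hsemi : ∀ x : ℕ → G, f (x ∘ swap 0 (n - 1)) = f x) (hn : 1 ≤ n) {k : ℕ} {σ : Perm ℕ}
    (hσ : ∀ m, n + k * (n - 1) ≤ m → σ m = m) (hmod : ∀ m, σ m ≡ m [MOD n - 1]) :
    σ ∈ nestStabilizer n f k := by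
  set S : Set (Perm ℕ) := {τ | τ ∈ nestStabilizer n f k ∧ τ.IsSwap}
  have hS : ∀ τ ∈ S, τ.IsSwap := fun τ hτ => hτ.2
  refine (Subgroup.closure_le _).mpr (fun τ hτ => hτ.1) ((mem_closure_isSwap hS).mpr ⟨?_, ?_⟩)
  · refine (Set.finite_Iio (n + k * (n - 1))).subset fun m hm => ?_
    by_contra hlt
    exact hm (hσ m (not_lt.mp hlt))
  · intro m
    by_cases hfix : σ m = m
    · rw [hfix]
      exact MulAction.mem_orbit_self m
    have hm : m < n + k * (n - 1) := by
      by_contra hge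
      exact hfix (hσ m (not_lt.mp hge))
    have hσm : σ m < n + k * (n - 1) := by
      by_contra hge
      exact hfix (σ.injective (hσ _ (not_lt.mp hge)))
    have hswap : swap m (σ m) ∈ S :=
      ⟨swap_mem_nestStabilizer hdep ha hsemi hn hm hσm (hmod m).symm, m, σ m, Ne.symm hfix, rfl⟩
    exact ⟨⟨swap m (σ m), Subgroup.subset_closure hswap⟩, swap_apply_left m (σ m)⟩

/-- After the first `t` rows of an `n × n` array stored row by row have been contracted,
row `i < t` sits at position `i` and the entries of the later rows have moved `t * (n - 1)`
places to the left. -/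
def contractRows (n : ℕ) (f : (ℕ → G) → G) (t : ℕ) (y : ℕ → G) : ℕ → G :=
  fun i => if i < t then f (fun j => y (i * n + j)) else y (i + t * (n - 1))

lemma contract_contractRows (hn : 1 ≤ n) (t : ℕ) (y : ℕ → G) :
    contract n f t (contractRows n f t y) = contractRows n f (t + 1) y := by
  obtain ⟨n, rfl⟩ : ∃ m, n = m + 1 := ⟨n - 1, by omega⟩
  funext i
  rcases Nat.lt_trichotomy i t with h | rfl | h
  · rw [contract_of_lt h]
    simp only [contractRows, if_pos h, if_pos (Nat.lt_succ_of_lt h)]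
  · rw [contract_self]
    simp only [contractRows, Nat.lt_succ_self, if_true, Nat.add_sub_cancel]
    congr 1
    funext j
    rw [if_neg (by omega)]
    congr 1
    ring
  · rw [contract_of_gt h, show i + (n + 1) - 1 = i + n by omega]
    simp only [contractRows, if_neg (show ¬i + n < t by omega),
      if_neg (show ¬i < t + 1 by omega), Nat.add_sub_cancel]
    congr 1
    ring

lemma nest_eq_nest_contractRows (hdep : DepOn n f) (ha : Assoc n f) (hn : 1 ≤ n) {t : ℕ}
    (ht : t ≤ n) (y : ℕ → G) :
    nest n f n y = nest n f (n - t) (contractRows n f t y) := by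
  induction t with
  | zero =>
    congr 1
    funext i
    simp [contractRows]
  | succ t ih =>
    obtain ⟨k, hk⟩ : ∃ k, n - t = k + 1 := ⟨n - t - 1, by omega⟩
    have hkt : n - (t + 1) = k := by omega
    have ht' : t ≤ (k + 1) * (n - 1) := le_mul_of_one_le_of_le (by omega) (by omega)
    rw [ih (by omega), hk, hkt, nest_succ_eq_nest_contract hdep ha hn k ht',
      contract_contractRows hn]

lemma nest_eq_rows (hdep : DepOn n f) (ha : Assoc n f) (hn : 1 ≤ n) (y : ℕ → G) :
    nest n f n y = f (fun i => f (fun j => y (i * n + j))) := by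
  rw [nest_eq_nest_contractRows hdep ha hn le_rfl, Nat.sub_self]
  exact hdep _ _ fun i hi => by simp [contractRows, hi]

lemma DepOn.nested_congr (hdep : DepOn n f) {x y : ℕ → ℕ → G}
    (h : ∀ i < n, ∀ j < n, x i j = y i j) : f (fun i => f (x i)) = f (fun i => f (y i)) :=
  hdep _ _ fun i hi => hdep _ _ fun j hj => h i hi j hj

lemma transpose_mem_nestStabilizer (hdep : DepOn n f) (ha : Assoc n f)
    (hsemi : ∀ x : ℕ → G, f (x ∘ swap 0 (n - 1)) = f x) (hn : 1 ≤ n) :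
    (transposeIdx_involutive n).toPerm ∈ nestStabilizer n f n := by
  refine mem_nestStabilizer_of_modEq hdep ha hsemi hn (fun m hm => ?_) (transposeIdx_modEq n)
  have hsq : n + n * (n - 1) = n * n := by
    obtain ⟨k, rfl⟩ : ∃ k, n = k + 1 := ⟨n - 1, by omega⟩
    simp only [Nat.add_sub_cancel]
    ring
  simp [transposeIdx, hsq ▸ hm]

end NAry

theorem semiabelian_medial {G : Type*} (n : ℕ) (hn : 3 ≤ n) (f : (ℕ → G) → G)
    (hG : IsNAryGroup n f)
    (hsemi : ∀ x : ℕ → G,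
      f x = f (fun k => if k = 0 then x (n - 1) else if k = n - 1 then x 0 else x k)) :
    ∀ x : ℕ → ℕ → G,
      f (fun i => f (fun j => x i j)) = f (fun i => f (fun j => x j i)) := by
  obtain ⟨hdep, ha, -⟩ := hG
  have hn1 : 1 ≤ n := by omega
  have hswap : ∀ x : ℕ → G, f (x ∘ swap 0 (n - 1)) = f x := fun x => by
    rw [hsemi x]
    congr 1
    funext k
    simp only [Function.comp_apply, swap_apply_def]
    split_ifs <;> rfl
  set T := (transposeIdx_involutive n).toPerm
  intro x
  set y : ℕ → G := fun m => x (m / n) (m % n)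
  have hy : ∀ i < n, ∀ j < n, y (i * n + j) = x i j := fun i _ j hj => by
    simp only [y, Nat.mul_add_div_of_lt hj, Nat.mul_add_mod_of_lt hj]
  calc f (fun i => f (fun j => x i j))
      = f (fun i => f (fun j => y (i * n + j))) :=
        hdep.nested_congr fun i hi j hj => (hy i hi j hj).symm
    _ = nest n f n (y ∘ T) := by
        rw [transpose_mem_nestStabilizer hdep ha hswap hn1 y, nest_eq_rows hdep ha hn1]
    _ = f (fun i => f (fun j => x j i)) := by
        rw [nest_eq_rows hdep ha hn1]
        refine hdep.nested_congr fun i hi j hj => ?_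
        simp only [Function.comp_apply, T, Function.Involutive.coe_toPerm,
          transposeIdx_mul_add hi hj]
        exact hy j hj i hi
end

section
/- In a semiabelian n-ary group, the skew operation distributes over f: the skew of f(x_1,...,x_n) equals f(x̄_1,...,x̄_n). -/
open NAry

/-!
Fix `a : G`. By associativity of `f`, the binary retract `x + y = f(x, a, …, a, y)` is a group,
abelian because `f` is semiabelian, with zero the skew element of `a`. Associativity also splits
`f` at every place `i`, which shows that `f w - f (w with 0 at place i)` depends only on `w i` and
additively so. Peeling off the places one at a time gives the Hosszú–Gluskin form
`f w = ∑ ψ i (w i) + f 0` with pairwise commuting endomorphisms `ψ i`. Such an `f` is medial, and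
mediality applied to the `n × n` array whose last row is `x̄` and other rows `x` gives
`f (f x, …, f x, f x̄) = f (f (x₁, …, x₁, x̄₁), …, f (xₙ, …, xₙ, x̄ₙ)) = f x`.
-/

namespace NAry

variable {G : Type*} {n : ℕ} {f : (ℕ → G) → G}

open Function Finset

def IsSemiabelian (n : ℕ) (f : (ℕ → G) → G) : Prop :=
  ∀ x : ℕ → G, f x = f (fun k => if k = 0 then x (n - 1) else if k = n - 1 then x 0 else x k)

def IsMedial (f : (ℕ → G) → G) : Prop :=
  ∀ M : ℕ → ℕ → G, f (fun i => f (M i)) = f (fun j => f (fun i => M i j))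

theorem IsMedial.isSkew_apply (hf : IsMedial f) {x s : ℕ → G}
    (hs : ∀ j, IsSkew n f (x j) (s j)) : IsSkew n f (f x) (f s) := by
  have h := hf fun i j => if i = n - 1 then s j else x j
  have hrows : (fun i => f (fun j => if i = n - 1 then s j else x j))
      = update (fun _ => f x) (n - 1) (f s) := by
    funext i
    by_cases hi : i = n - 1 <;> simp [hi]
  have hcols : (fun j => f (fun i => if i = n - 1 then s j else x j)) = x := by
    funext j
    refine (congrArg f ?_).trans (hs j)
    funext i
    by_cases hi : i = n - 1 <;> simp [hi]
  rw [hrows, hcols] at h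
  exact h

theorem isMedial_of_eq_sum_add [AddCommGroup G] (ψ : Fin n → G →+ G) (c : G)
    (hcomm : ∀ i j, (ψ i).comp (ψ j) = (ψ j).comp (ψ i)) (hf : ∀ w, f w = ∑ i, ψ i (w i) + c) :
    IsMedial f := by
  intro M
  simp only [hf, map_add, map_sum, sum_add_distrib]
  rw [sum_comm]
  congr 2
  exact sum_congr rfl fun i _ => sum_congr rfl fun j _ => DFunLike.congr_fun (hcomm j i) (M j i)

theorem DepOn.comp_eq (hdep : DepOn n f) {W L : ℕ → G} {i : ℕ} (hpre : ∀ k < i, W k = L k)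
    (hin : f (fun m => W (i + m)) = L i) (hsuf : ∀ k, i < k → k < n → W (k + n - 1) = L k) :
    Comp n f W i = f L := by
  refine hdep _ _ fun k hk => ?_
  rcases lt_trichotomy k i with h | rfl | h
  · simp [h, hpre k h]
  · simp [hin]
  · simp [h.not_gt, h.ne', hsuf k h hk]

theorem apply_update_const_comm (hdep : DepOn n f) (hassoc : Assoc n f) {i j : ℕ} (hi : i < n)
    (hj : j < n) (a x : G) :
    f (update (fun _ => a) i (f (update (fun _ => a) j x)))
      = f (update (fun _ => a) j (f (update (fun _ => a) i x))) := by
  have key : ∀ p q, q < n → p + q = i + j → Comp n f (update (fun _ => a) (i + j) x) p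
      = f (update (fun _ => a) p (f (update (fun _ => a) q x))) := by
    intro p q hq hpq
    refine hdep.comp_eq (fun k hk => ?_) ?_ (fun k hk _ => ?_)
    · simp only [update_apply]
      split_ifs <;> first | rfl | omega
    · rw [update_self]
      congr 1
      funext m
      simp only [update_apply]
      split_ifs <;> first | rfl | omega
    · simp only [update_apply]
      split_ifs <;> first | rfl | omega
  rw [← key i j hj rfl, ← key j i hi (add_comm j i)]
  exact hassoc _ i j hi hj

theorem DepOn.apply_eq_sum_add [AddCommMonoid G] (hdep : DepOn n f) (φ : ℕ → G → G)
    (hφ : ∀ i < n, ∀ w, f w = φ i (w i) + f (update w i 0)) (w : ℕ → G) :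
    f w = ∑ i ∈ range n, φ i (w i) + f 0 := by
  have hprefix : ∀ m ≤ n,
      f (fun k => if k < m then w k else 0) = ∑ i ∈ range m, φ i (w i) + f 0 := by
    intro m hm
    induction m with
    | zero => simp [Pi.zero_def]
    | succ m ih =>
      have hupd : update (fun k => if k < m + 1 then w k else 0) m 0
          = fun k => if k < m then w k else 0 := by
        funext k
        simp only [update_apply]
        split_ifs <;> first | rfl | omega
      rw [hφ m (by omega), hupd, ih (by omega), sum_range_succ, if_pos m.lt_succ_self]
      abel
  rw [← hprefix n le_rfl]
  exact hdep _ _ fun k hk => (if_pos hk).symm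

/-- `f (retractWord n a x y) = f(x, a, …, a, y)` is the binary retract of `f` at `a`. -/
def retractWord (n : ℕ) (a x y : G) : ℕ → G :=
  fun k => if k = 0 then x else if k = n - 1 then y else a

@[simp]
theorem update_retractWord_zero (a x y u : G) :
    update (retractWord n a x y) 0 u = retractWord n a u y := by
  funext k
  simp only [retractWord, update_apply]
  split_ifs <;> rfl

theorem update_retractWord_last (hn : 2 ≤ n) (a x y v : G) :
    update (retractWord n a x y) (n - 1) v = retractWord n a x v := by
  funext k
  simp only [retractWord, update_apply]
  split_ifs <;> first | rfl | omega

theorem update_const_zero_eq_retractWord (a u : G) :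
    update (fun _ => a) 0 u = retractWord n a u a := by
  funext k
  simp only [retractWord, update_apply]
  split_ifs <;> rfl

theorem update_const_last_eq_retractWord (hn : 2 ≤ n) (a v : G) :
    update (fun _ => a) (n - 1) v = retractWord n a a v := by
  funext k
  simp only [retractWord, update_apply]
  split_ifs <;> first | rfl | omega

theorem apply_update_zero_retract (hn : 2 ≤ n) (hdep : DepOn n f) (hassoc : Assoc n f)
    (a u v : G) (w : ℕ → G) :
    f (update w 0 (f (retractWord n a u v))) = f (retractWord n a u (f (update w 0 v))) := by
  set W : ℕ → G := fun k =>
    if k = 0 then u else if k < n - 1 then a else if k = n - 1 then v else w (k - (n - 1))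
  have hfirst : Comp n f W 0 = f (update w 0 (f (retractWord n a u v))) := by
    refine hdep.comp_eq (fun k hk => by omega) ?_ (fun k hk _ => ?_)
    · rw [update_self]
      refine hdep _ _ fun m hm => ?_
      simp only [W, retractWord, zero_add]
      split_ifs <;> first | rfl | omega
    · simp only [W, update_apply]
      split_ifs <;> first | rfl | omega | (congr 1; omega)
  have hlast : Comp n f W (n - 1) = f (retractWord n a u (f (update w 0 v))) := by
    refine hdep.comp_eq (fun k hk => ?_) ?_ (fun k hk hkn => by omega)
    · simp only [W, retractWord]
      split_ifs <;> first | rfl | omega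
    · simp only [retractWord, if_neg (show n - 1 ≠ 0 by omega), if_true]
      refine hdep _ _ fun m hm => ?_
      simp only [W, update_apply]
      split_ifs <;> first | rfl | omega | (congr 1; omega)
  rw [← hfirst, ← hlast]
  exact hassoc W 0 (n - 1) (by omega) (by omega)

theorem apply_retractWord_assoc (hn : 2 ≤ n) (hdep : DepOn n f) (hassoc : Assoc n f) (a x y z : G) :
    f (retractWord n a (f (retractWord n a x y)) z)
      = f (retractWord n a x (f (retractWord n a y z))) := by
  simpa using apply_update_zero_retract hn hdep hassoc a x y (retractWord n a y z)

theorem apply_retractWord_comm (hn : 2 ≤ n) (hsemi : IsSemiabelian n f) (a x y : G) :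
    f (retractWord n a x y) = f (retractWord n a y x) := by
  rw [hsemi]
  congr 1
  funext k
  simp only [retractWord]
  split_ifs <;> first | rfl | omega

theorem apply_retractWord_of_isSkew (hn : 2 ≤ n) (hdep : DepOn n f) (hassoc : Assoc n f)
    (hsolv : Solvable n f) {a e : G} (he : IsSkew n f a e) (y : G) :
    f (retractWord n a y e) = y := by
  rw [IsSkew, update_const_last_eq_retractWord hn] at he
  obtain ⟨z, rfl, -⟩ := hsolv 0 (by omega) (fun _ => a) y
  rw [update_const_zero_eq_retractWord, apply_retractWord_assoc hn hdep hassoc, he]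

theorem exists_apply_retractWord_eq (hn : 2 ≤ n) (hsolv : Solvable n f) (a x e : G) :
    ∃ y, f (retractWord n a x y) = e := by
  obtain ⟨y, hy, -⟩ := hsolv (n - 1) (by omega) (retractWord n a x a) e
  exact ⟨y, by rwa [update_retractWord_last hn] at hy⟩

theorem exists_addCommGroup_retract (hn : 2 ≤ n) (hG : IsNAryGroup n f)
    (hsemi : IsSemiabelian n f) (a : G) :
    ∃ _ : AddCommGroup G, ∀ x y, f (retractWord n a x y) = x + y := by
  obtain ⟨hdep, hassoc, hsolv⟩ := hG
  obtain ⟨e, he, -⟩ := hsolv (n - 1) (by omega) (fun _ => a) a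
  have hzero := apply_retractWord_of_isSkew hn hdep hassoc hsolv he
  have hcomm := apply_retractWord_comm hn hsemi a
  choose neg hneg using fun x => exists_apply_retractWord_eq hn hsolv a x e
  let _ : Add G := ⟨fun x y => f (retractWord n a x y)⟩
  let _ : Zero G := ⟨e⟩
  let _ : Neg G := ⟨neg⟩
  exact ⟨{ AddGroup.ofLeftAxioms (apply_retractWord_assoc hn hdep hassoc a)
      (fun x => (hcomm e x).trans (hzero x)) (fun x => (hcomm (neg x) x).trans (hneg x)) with
    add_comm := hcomm }, fun _ _ => rfl⟩

section RetractGroup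

variable [AddCommGroup G] {a : G}

theorem apply_update_zero_add (hn : 2 ≤ n) (hdep : DepOn n f) (hassoc : Assoc n f)
    (hadd : ∀ x y, f (retractWord n a x y) = x + y) (w : ℕ → G) (u v : G) :
    f (update w 0 (u + v)) = u + f (update w 0 v) := by
  simpa only [hadd] using apply_update_zero_retract hn hdep hassoc a u v w

theorem apply_eq_add_apply_update_zero (hn : 2 ≤ n) (hdep : DepOn n f) (hassoc : Assoc n f)
    (hadd : ∀ x y, f (retractWord n a x y) = x + y) (w : ℕ → G) :
    f w = w 0 + f (update w 0 0) := by
  simpa using apply_update_zero_add hn hdep hassoc hadd w (w 0) 0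

theorem apply_update_add (hdep : DepOn n f) (hassoc : Assoc n f)
    (hadd : ∀ x y, f (retractWord n a x y) = x + y) {i : ℕ} (hi : 1 ≤ i) (hin : i < n)
    (w : ℕ → G) (y z : G) :
    f (update w i (y + z))
      = f (fun k => if k < i then w k else if k = i then y else a)
        + f (fun k => if k = 0 then 0 else if k < i then a else if k = i then z else w k) := by
  set W : ℕ → G := fun k => if k < i then w k else if k = i then y else
    if k < i + n - 1 then a else if k = i + n - 1 then z else w (k - (n - 1))
  set P : ℕ → G := fun k => if k < i then w k else if k = i then y else a
  have hmid : Comp n f W i = f (update w i (y + z)) := by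
    refine hdep.comp_eq (fun k hk => ?_) ?_ (fun k hk _ => ?_)
    · simp only [W, update_apply]
      split_ifs <;> first | rfl | omega
    · rw [update_self, ← hadd]
      refine hdep _ _ fun m hm => ?_
      simp only [W, retractWord]
      split_ifs <;> first | rfl | omega
    · simp only [W, update_apply]
      split_ifs <;> first | rfl | omega | (congr 1; omega)
  have hfirst : Comp n f W 0
      = f (fun k => if k = 0 then f P else if k < i then a else if k = i then z else w k) := by
    refine hdep.comp_eq (fun k hk => by omega) ?_ (fun k hk _ => ?_)
    · refine hdep _ _ fun m hm => ?_
      simp only [W, P, zero_add]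
      split_ifs <;> first | rfl | omega
    · simp only [W]
      split_ifs <;> first | rfl | omega | (congr 1; omega)
  rw [← hmid, hassoc W i 0 (by omega) (by omega), hfirst,
    apply_eq_add_apply_update_zero (by omega) hdep hassoc hadd]
  congr 2
  funext k
  simp only [update_apply]
  split_ifs <;> rfl

theorem apply_update_sub_apply_update_zero (hn : 2 ≤ n) (hdep : DepOn n f) (hassoc : Assoc n f)
    (hadd : ∀ x y, f (retractWord n a x y) = x + y) {i : ℕ} (hin : i < n) (w v : ℕ → G) (y : G) :
    f (update w i y) - f (update w i 0) = f (update v i y) - f (update v i 0) := by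
  rcases Nat.eq_zero_or_pos i with rfl | hi
  · have h : ∀ u : ℕ → G, f (update u 0 y) - f (update u 0 0) = y := fun u => by
      rw [apply_eq_add_apply_update_zero hn hdep hassoc hadd (update u 0 y)]
      simp
    rw [h, h]
  -- The split separates the part of `w` before `i` from the part after `i`, so killing first
  -- the suffix and then the prefix reaches a word `c` that does not depend on `w`.
  set c : ℕ → G := fun k => if k = 0 then 0 else a
  have hsplit := apply_update_add hdep hassoc hadd hi hin
  suffices h : ∀ u : ℕ → G,
      f (update u i y) - f (update u i 0) = f (update c i y) - f (update c i 0) by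
    rw [h w, h v]
  intro u
  set p : ℕ → G := fun k => if k < i then u k else if k = i then 0 else a
  have hp : ∀ t, update p i t = fun k => if k < i then u k else if k = i then t else a := by
    intro t; funext k; simp only [p, update_apply]; split_ifs <;> first | rfl | omega
  have hc : ∀ t, update c i t
      = fun k => if k = 0 then 0 else if k < i then a else if k = i then t else p k := by
    intro t; funext k; simp only [c, p, update_apply]; split_ifs <;> first | rfl | omega
  have h1 := hsplit u y 0
  have h2 := hsplit u 0 0
  have h3 := hsplit p 0 y
  have h4 := hsplit p 0 0
  rw [add_zero] at h1 h2 h4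
  rw [zero_add] at h3
  calc f (update u i y) - f (update u i 0) = f (update p i y) - f (update p i 0) := by
        rw [h1, h2, hp, hp]; abel
    _ = f (update c i y) - f (update c i 0) := by rw [h3, h4, hc, hc]; abel

theorem apply_update_add_add (hn : 2 ≤ n) (hdep : DepOn n f) (hassoc : Assoc n f)
    (hadd : ∀ x y, f (retractWord n a x y) = x + y) {i : ℕ} (hin : i < n) (w : ℕ → G) (y z : G) :
    f (update w i (y + z)) + f (update w i 0) = f (update w i y) + f (update w i z) := by
  rcases Nat.eq_zero_or_pos i with rfl | hi
  · have h := apply_update_zero_add hn hdep hassoc hadd w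
    have hy := h y 0
    rw [add_zero] at hy
    rw [h y z, hy]
    abel
  · have h := apply_update_add hdep hassoc hadd hi hin w
    have hy := h y 0
    have hz := h 0 z
    have h0 := h 0 0
    simp only [add_zero, zero_add] at hy hz h0
    rw [h y z, hy, hz, h0]
    abel

theorem exists_eq_sum_add (hn : 2 ≤ n) (hdep : DepOn n f) (hassoc : Assoc n f)
    (hadd : ∀ x y, f (retractWord n a x y) = x + y) :
    ∃ (ψ : Fin n → G →+ G) (c : G),
      (∀ i j, (ψ i).comp (ψ j) = (ψ j).comp (ψ i)) ∧ ∀ w, f w = ∑ i, ψ i (w i) + c := by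
  have hzero : ∀ i, update (0 : ℕ → G) i 0 = 0 := fun i => update_eq_self_iff.2 rfl
  let ψ : Fin n → G →+ G := fun i => AddMonoidHom.mk' (fun y => f (update 0 i y) - f 0)
    fun y z => by
      have h := apply_update_add_add hn hdep hassoc hadd i.2 0 y z
      rw [hzero] at h
      calc f (update 0 i (y + z)) - f 0 = f (update 0 i (y + z)) + f 0 - f 0 - f 0 := by abel
        _ = f (update 0 i y) - f 0 + (f (update 0 i z) - f 0) := by rw [h]; abel
  have hψ : ∀ i y, ψ i y = f (update 0 i y) - f 0 := fun _ _ => rfl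
  have hT : ∀ (i j : Fin n) y, f (update 0 i (f (update 0 j y)))
      = f (update 0 j (f (update 0 i y))) := fun i j y =>
    apply_update_const_comm hdep hassoc i.2 j.2 0 y
  refine ⟨ψ, f 0, fun i j => AddMonoidHom.ext fun y => ?_, fun w => ?_⟩
  · have hc : f (update 0 i (f 0)) = f (update 0 j (f 0)) := by simpa [hzero] using hT i j 0
    simp only [AddMonoidHom.comp_apply]
    rw [hψ j, hψ i y, map_sub, map_sub, hψ i, hψ i, hψ j, hψ j, hT i j, hc]
  · rw [hdep.apply_eq_sum_add (fun i y => f (update 0 i y) - f 0) (fun i hi w => ?_) w,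
      ← Fin.sum_univ_eq_sum_range]
    · rfl
    have h := apply_update_sub_apply_update_zero hn hdep hassoc hadd hi w 0 (w i)
    rw [update_eq_self, hzero] at h
    rw [← h]
    abel

end RetractGroup

end NAry

theorem semiabelian_skew_distrib {G : Type*} (n : ℕ) (hn : 3 ≤ n) (f : (ℕ → G) → G)
    (hG : IsNAryGroup n f)
    (hsemi : ∀ x : ℕ → G,
      f x = f (fun k => if k = 0 then x (n - 1) else if k = n - 1 then x 0 else x k))
    (sk : G → G) (hsk : ∀ x, IsSkew n f x (sk x)) :
    ∀ x : ℕ → G, IsSkew n f (f x) (f (fun k => sk (x k))) := by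
  intro x
  obtain ⟨_, hadd⟩ := exists_addCommGroup_retract (by omega) hG hsemi (x 0)
  obtain ⟨ψ, c, hcomm, hf⟩ := exists_eq_sum_add (by omega) hG.1 hG.2.1 hadd
  exact (isMedial_of_eq_sum_add ψ c hcomm hf).isSkew_apply fun j => hsk (x j)
end

section
/- For any n-ary group (G,f), the formula x.a = f(x, a, x,...,x, x̄) (with n−3 copies of x between a and x̄) defines an action of (G,f) on itself: f(x_1,...,x_n).a = x_1.(x_2.(⋯(x_n.a)⋯)), every a is fixed by some x, and each map a ↦ x.a is a bijection. -/
/-!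
Read `x.a = f(x, a, x, …, x, x̄)` as the conjugate `x a x⁻¹`, the word `x ⋯ x x̄` of length `n - 2`
playing the role of `x⁻¹`. Comparing bracketings of products of length `2n - 1` and cancelling
shows first that `x ⋯ x x̄ x` is right neutral and then that the words `(x.a) x` and `x a` may
replace each other at the head of any product. Pushing this along `x₀ ⋯ x_{n-1}` one letter at a
time (a replacement of a prefix survives putting a letter in front of it) shows that, for
`y = f(x₀, …, x_{n-1})`, the word `(x₀.(⋯(x_{n-1}.a))) y` may replace `y a`; so may `(y.a) y`, and
cancelling `y` gives `y.a = x₀.(⋯(x_{n-1}.a))`.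
-/

namespace NAry

section

variable {G : Type*} {n : ℕ} {f : (ℕ → G) → G}

theorem Solvable.eq_of_apply_eq (hsol : Solvable n f) (hdep : DepOn n f) {i : ℕ} (hi : i < n)
    {g g' : ℕ → G} (hagree : ∀ k < n, k ≠ i → g k = g' k) (heq : f g = f g') : g i = g' i := by
  obtain ⟨z, -, huniq⟩ := hsol i hi g (f g')
  have hg : f (Function.update g i (g i)) = f g' := by rw [Function.update_eq_self, heq]
  have hg' : f (Function.update g i (g' i)) = f g' := by
    refine hdep _ _ fun k hk => ?_
    rcases eq_or_ne k i with rfl | hki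
    · simp
    · rw [Function.update_of_ne hki, hagree k hk hki]
  rw [huniq _ hg, huniq _ hg']

theorem Assoc.apply_eq_apply (hassoc : Assoc n f) (hdep : DepOn n f) (W : ℕ → G) {i j : ℕ}
    (hi : i < n) (hj : j < n) {g g' : ℕ → G} {v v' : G}
    (hv : f (fun m => W (i + m)) = v) (hv' : f (fun m => W (j + m)) = v')
    (hg : ∀ k < n, g k = if k < i then W k else if k = i then v else W (k + n - 1))
    (hg' : ∀ k < n, g' k = if k < j then W k else if k = j then v' else W (k + n - 1)) :
    f g = f g' :=
  calc f g = Comp n f W i := hdep _ _ fun k hk => by rw [hg k hk, hv]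
    _ = Comp n f W j := hassoc W i j hi hj
    _ = f g' := hdep _ _ fun k hk => by rw [hg' k hk, hv']

theorem isSkew_iff {x sx : G} :
    IsSkew n f x sx ↔ f (fun k => if k = n - 1 then sx else x) = x := by
  rw [IsSkew, show Function.update (fun _ => x) (n - 1) sx = fun k => if k = n - 1 then sx else x
    from funext (Function.update_apply _ _ _)]

theorem IsSkew.apply_skew_at_sub_two (hn : 3 ≤ n) (hassoc : Assoc n f) (hdep : DepOn n f)
    (hsol : Solvable n f) {x sx : G} (hs : IsSkew n f x sx) :
    f (fun k => if k = n - 2 then sx else x) = x := by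
  rw [isSkew_iff] at hs
  set y := f (fun k => if k = n - 2 then sx else x)
  -- compare the two bracketings of `x, …, x, x̄, x, …, x, x̄`
  let W : ℕ → G := fun k => if k = n - 1 ∨ k = 2 * n - 2 then sx else x
  have hW₀ : f (fun m => W (0 + m)) = x :=
    (hdep _ _ fun k hk => by simp only [W]; split_ifs <;> first | rfl | omega).trans hs
  have hW₁ : f (fun m => W (1 + m)) = y :=
    hdep _ _ fun k hk => by simp only [W]; split_ifs <;> first | rfl | omega
  have key : f (fun k => if k = 1 then y else if k = n - 1 then sx else x) =
      f (fun k => if k = n - 1 then sx else x) :=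
    hassoc.apply_eq_apply hdep W (by omega) (by omega) hW₁ hW₀
      (fun k _ => by simp only [W]; split_ifs <;> first | rfl | omega)
      (fun k _ => by simp only [W]; split_ifs <;> first | rfl | omega)
  simpa [show 1 ≠ n - 1 by omega] using
    hsol.eq_of_apply_eq hdep (by omega : 1 < n)
      (fun k _ hk => by simp only [hk, if_false]) key

theorem IsSkew.right_neutral (hn : 3 ≤ n) (hassoc : Assoc n f) (hdep : DepOn n f)
    (hsol : Solvable n f) {x sx : G} (hs : IsSkew n f x sx) (b : G) :
    f (fun k => if k = 0 then b else if k = n - 2 then sx else x) = b := by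
  set T : G → G := fun c => f (fun k => if k = 0 then c else if k = n - 2 then sx else x)
  change T b = b
  let W : ℕ → G := fun k => if k = 0 then b else if k = n - 2 ∨ k = 2 * n - 3 then sx else x
  have hW₀ : f (fun m => W (0 + m)) = T b :=
    hdep _ _ fun k hk => by simp only [W]; split_ifs <;> first | rfl | omega
  have hWlast : f (fun m => W (n - 1 + m)) = x :=
    (hdep _ _ fun k hk => by simp only [W]; split_ifs <;> first | rfl | omega).trans
      (hs.apply_skew_at_sub_two hn hassoc hdep hsol)
  have key : T (T b) = T b :=
    hassoc.apply_eq_apply hdep W (by omega) (by omega) hW₀ hWlast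
      (fun k _ => by simp only [W]; split_ifs <;> first | rfl | omega)
      (fun k _ => by simp only [W]; split_ifs <;> first | rfl | omega)
  simpa [T] using hsol.eq_of_apply_eq hdep (by omega : 0 < n)
    (fun k _ hk => by simp only [hk, if_false]) key

def conj (n : ℕ) (f : (ℕ → G) → G) (x sx a : G) : G :=
  f (fun k => if k = 1 then a else if k = n - 1 then sx else x)

def PrefixEquiv (f : (ℕ → G) → G) (d : ℕ) (p q : ℕ → G) : Prop :=
  ∀ t : ℕ → G, f (fun k => if k < d then p k else t k) = f (fun k => if k < d then q k else t k)

theorem PrefixEquiv.trans {d : ℕ} {p q r : ℕ → G} (hpq : PrefixEquiv f d p q)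
    (hqr : PrefixEquiv f d q r) : PrefixEquiv f d p r :=
  fun t => (hpq t).trans (hqr t)

theorem PrefixEquiv.congr {d : ℕ} {p q p' q' : ℕ → G} (h : PrefixEquiv f d p q)
    (hp : ∀ k < d, p k = p' k) (hq : ∀ k < d, q k = q' k) : PrefixEquiv f d p' q' := by
  intro t
  convert h t using 2 <;> ext k <;> split_ifs with hk
  exacts [(hp k hk).symm, rfl, (hq k hk).symm, rfl]

theorem PrefixEquiv.extend {d e : ℕ} {p q : ℕ → G} (h : PrefixEquiv f d p q) (hde : d ≤ e)
    (r : ℕ → G) :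
    PrefixEquiv f e (fun k => if k < d then p k else r k)
      (fun k => if k < d then q k else r k) := by
  intro t
  have hsplit : ∀ s : ℕ → G, (fun k => if k < e then (if k < d then s k else r k) else t k) =
      fun k => if k < d then s k else if k < e then r k else t k :=
    fun s => funext fun k => by split_ifs <;> first | rfl | omega
  simpa only [hsplit] using h fun k => if k < e then r k else t k

theorem PrefixEquiv.cons (hassoc : Assoc n f) (hdep : DepOn n f) (hsol : Solvable n f)
    (hn : 1 < n) {d : ℕ} (hd : d < n) {p q : ℕ → G} (h : PrefixEquiv f d p q) (w : G) :
    PrefixEquiv f (d + 1) (fun k => if k = 0 then w else p (k - 1))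
      (fun k => if k = 0 then w else q (k - 1)) := by
  intro t
  -- after padding with `w`: `f(f(w, p, t), w, …, w) = f(w, f(p, t, w), w, …, w)`, and there `p`
  -- is a prefix again
  have pad : ∀ r : ℕ → G,
      f (fun k => if k = 0 then f (fun k => if k < d + 1 then (if k = 0 then w else r (k - 1))
        else t k) else w) =
      f (fun k => if k = 1 then f (fun k => if k < d then r k else if k + 1 < n then t (k + 1)
        else w) else w) := by
    intro r
    let W : ℕ → G := fun k =>
      if k = 0 then w else if k < d + 1 then r (k - 1) else if k < n then t k else w
    refine hassoc.apply_eq_apply hdep W (i := 0) (j := 1) (by omega) hn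
      (v := f (fun k => if k < d + 1 then (if k = 0 then w else r (k - 1)) else t k))
      (v' := f (fun k => if k < d then r k else if k + 1 < n then t (k + 1) else w))
      (hdep _ _ fun k hk => ?_) (hdep _ _ fun k hk => ?_) (fun k _ => ?_) (fun k _ => ?_) <;>
      simp only [W] <;> split_ifs <;> first | rfl | omega | (congr 1; omega)
  have := pad p
  rw [h (fun k => if k + 1 < n then t (k + 1) else w), ← pad q] at this
  simpa using hsol.eq_of_apply_eq hdep (by omega : 0 < n)
    (fun k _ hk => by simp only [hk, if_false]) this

theorem prefixEquiv_conj (hn : 3 ≤ n) (hassoc : Assoc n f) (hdep : DepOn n f)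
    (hsol : Solvable n f) {x sx : G} (hs : IsSkew n f x sx) (b : G) :
    PrefixEquiv f 2 (fun k => if k = 0 then conj n f x sx b else x)
      (fun k => if k = 0 then x else b) := by
  intro u
  let W : ℕ → G := fun k => if k = 1 then b else if k = n - 1 then sx else
    if k ≤ n then x else u (k - n + 1)
  refine hassoc.apply_eq_apply hdep W (i := 0) (j := 1) (v := conj n f x sx b) (by omega)
    (by omega) (hdep _ _ fun k hk => ?_)
    ((hdep _ _ fun k hk => ?_).trans (hs.right_neutral hn hassoc hdep hsol b))
    (fun k _ => ?_) (fun k _ => ?_) <;>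
    simp only [W] <;> split_ifs <;> first | rfl | omega | (congr 1; omega)

theorem prefixEquiv_foldr_conj (hn : 3 ≤ n) (hassoc : Assoc n f) (hdep : DepOn n f)
    (hsol : Solvable n f) {sk : G → G} (hsk : ∀ x, IsSkew n f x (sk x)) (x : ℕ → G) (a : G)
    {d : ℕ} (hd : d < n) (i : ℕ) :
    PrefixEquiv f (d + 1)
      (fun k => if k = 0 then (List.range' i d).foldr (fun j b => conj n f (x j) (sk (x j)) b) a
        else x (i + k - 1))
      (fun k => if k < d then x (i + k) else a) := by
  induction d generalizing i with
  | zero =>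
    intro t
    congr 1; funext k
    dsimp only
    split_ifs <;> first | rfl | omega
  | succ d ih =>
    rw [List.range'_succ, List.foldr_cons]
    set R := (List.range' (i + 1) d).foldr (fun j b => conj n f (x j) (sk (x j)) b) a
    have hconj := (prefixEquiv_conj hn hassoc hdep hsol (hsk (x i)) R).extend
      (by omega : 2 ≤ d + 2) (fun k => x (i + k - 1))
    have hshift := (ih (by omega) (i + 1)).cons hassoc hdep hsol (by omega) (by omega) (x i)
    let mid : ℕ → G := fun k => if k = 0 then x i else if k = 1 then R else x (i + k - 1)
    have h₁ : PrefixEquiv f (d + 2)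
        (fun k => if k = 0 then conj n f (x i) (sk (x i)) R else x (i + k - 1)) mid :=
      hconj.congr (fun k _ => by split_ifs <;> first | rfl | omega | (congr 1; omega))
        (fun k _ => by simp only [mid]; split_ifs <;> first | rfl | omega)
    have h₂ : PrefixEquiv f (d + 2) mid (fun k => if k < d + 1 then x (i + k) else a) :=
      hshift.congr
        (fun k _ => by simp only [mid]; split_ifs <;> first | rfl | omega | (congr 1; omega))
        (fun k _ => by split_ifs <;> first | rfl | omega | (congr 1; omega))
    exact h₁.trans h₂

theorem prefixEquiv_foldr_conj_range (hn : 3 ≤ n) (hassoc : Assoc n f) (hdep : DepOn n f)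
    (hsol : Solvable n f) {sk : G → G} (hsk : ∀ x, IsSkew n f x (sk x)) (x : ℕ → G) (a : G) :
    PrefixEquiv f 2
      (fun k => if k = 0 then (List.range n).foldr (fun i b => conj n f (x i) (sk (x i)) b) a
        else f x)
      (fun k => if k = 0 then f x else a) := by
  have hrange : List.range n = 0 :: List.range' 1 (n - 1) := by
    conv_lhs => rw [List.range_eq_range', show n = n - 1 + 1 by omega, List.range'_succ]
  rw [hrange, List.foldr_cons]
  set M := (List.range' 1 (n - 1)).foldr (fun i b => conj n f (x i) (sk (x i)) b) a
  set y := f x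
  set P := f (fun k => if k = 0 then conj n f (x 0) (sk (x 0)) M else x (k - 1))
  set Q := f (fun k => if k = 0 then x 0 else if k = 1 then M else x (k - 1))
  set R := f (fun k => if k = 0 then M else x k)
  set S := f (fun k => if k < n - 1 then x (k + 1) else a)
  have hPQ : P = Q := by
    have h := prefixEquiv_conj hn hassoc hdep hsol (hsk (x 0)) M fun k => x (k - 1)
    refine (hdep _ _ fun k _ => ?_).trans (h.trans (hdep _ _ fun k _ => ?_)) <;>
      beta_reduce <;> split_ifs <;> first | rfl | omega | (congr 1; omega)
  have hRS : R = S := by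
    have h := prefixEquiv_foldr_conj hn hassoc hdep hsol hsk x a (d := n - 1) (by omega) 1 x
    refine (hdep _ _ fun k _ => ?_).trans (h.trans (hdep _ _ fun k _ => ?_)) <;>
      beta_reduce <;> split_ifs <;> first | rfl | omega | (congr 1; omega)
  intro t
  let W₁ : ℕ → G := fun k => if k = 0 then conj n f (x 0) (sk (x 0)) M else
    if k ≤ n then x (k - 1) else t (k - n + 1)
  let W₂ : ℕ → G := fun k => if k = 0 then x 0 else if k = 1 then M else
    if k ≤ n then x (k - 1) else t (k - n + 1)
  let W₃ : ℕ → G := fun k => if k < n then x k else if k = n then a else t (k - n + 1)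
  calc _ = f (fun k => if k = 0 then P else if k = 1 then x (n - 1) else t k) := by
        refine hassoc.apply_eq_apply hdep W₁ (i := 1) (j := 0) (v := y) (v' := P) (by omega)
          (by omega) (hdep _ _ fun k hk => ?_) (hdep _ _ fun k hk => ?_) (fun k _ => ?_)
          (fun k _ => ?_) <;>
          simp only [W₁] <;> split_ifs <;> first | rfl | omega | (congr 1; omega)
    _ = f (fun k => if k = 0 then Q else if k = 1 then x (n - 1) else t k) := by rw [hPQ]
    _ = f (fun k => if k = 0 then x 0 else if k = 1 then R else t k) := by
        refine hassoc.apply_eq_apply hdep W₂ (i := 0) (j := 1) (v := Q) (v' := R) (by omega)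
          (by omega) (hdep _ _ fun k hk => ?_) (hdep _ _ fun k hk => ?_) (fun k _ => ?_)
          (fun k _ => ?_) <;>
          simp only [W₂] <;> split_ifs <;> first | rfl | omega | (congr 1; omega)
    _ = f (fun k => if k = 0 then x 0 else if k = 1 then S else t k) := by rw [hRS]
    _ = _ := by
        refine hassoc.apply_eq_apply hdep W₃ (i := 1) (j := 0) (v := S) (v' := y) (by omega)
          (by omega) (hdep _ _ fun k hk => ?_) (hdep _ _ fun k hk => ?_) (fun k _ => ?_)
          (fun k _ => ?_) <;>
          simp only [W₃] <;> split_ifs <;> first | rfl | omega | (congr 1; omega)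

theorem IsSkew.conj_self (hn : 3 ≤ n) {x sx : G} (hs : IsSkew n f x sx) : conj n f x sx x = x :=
  (congrArg f (funext fun k => by split_ifs <;> first | rfl | omega)).trans (isSkew_iff.1 hs)

theorem conj_bijective (hn : 1 < n) (hdep : DepOn n f) (hsol : Solvable n f) (x sx : G) :
    Function.Bijective (conj n f x sx) := by
  refine ⟨fun a b h => ?_, fun c => ?_⟩
  · simpa using hsol.eq_of_apply_eq hdep hn
      (fun k _ hk => by simp only [hk, if_false]) h
  · obtain ⟨z, hz, -⟩ := hsol 1 hn (fun k => if k = n - 1 then sx else x) c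
    refine ⟨z, (congrArg f (funext fun k => ?_)).trans hz⟩
    rw [Function.update_apply]

theorem conj_apply_eq_foldr (hn : 3 ≤ n) (hassoc : Assoc n f) (hdep : DepOn n f)
    (hsol : Solvable n f) {sk : G → G} (hsk : ∀ x, IsSkew n f x (sk x)) (x : ℕ → G) (a : G) :
    conj n f (f x) (sk (f x)) a =
      (List.range n).foldr (fun i b => conj n f (x i) (sk (x i)) b) a := by
  have h₁ := prefixEquiv_conj hn hassoc hdep hsol (hsk (f x)) a fun _ => f x
  have h₂ := prefixEquiv_foldr_conj_range hn hassoc hdep hsol hsk x a fun _ => f x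
  simpa using hsol.eq_of_apply_eq hdep (by omega : 0 < n)
    (fun k _ hk => by simp only [hk, if_false]) (h₁.trans h₂.symm)

end

end NAry

open NAry

theorem conjugation_action {G : Type*} (n : ℕ) (hn : 3 ≤ n) (f : (ℕ → G) → G)
    (hG : IsNAryGroup n f) (sk : G → G) (hsk : ∀ x, IsSkew n f x (sk x)) :
    IsAction n f
      (fun x a => f (fun k => if k = 1 then a else if k = n - 1 then sk x else x)) := by
  obtain ⟨hdep, hassoc, hsol⟩ := hG
  exact ⟨conj_apply_eq_foldr hn hassoc hdep hsol hsk, fun a => ⟨a, (hsk a).conj_self hn⟩,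
    fun x => conj_bijective (by omega) hdep hsol x (sk x)⟩
end

section
/- Let (G,f) be an n-ary group, a ∈ G, and x an element of the centralizer C_G(a) = {x : f(x,a,x,...,x,x̄) = a}. Then for all nonnegative integers i, j, k with i + j + k = n − 2, f(x,...,x, a, x,...,x, x̄, x,...,x) = a, where a occurs after i copies of x and x̄ after j further copies of x, and similarly with the positions of a and x̄ exchanged. -/
/-! Write `λ p = f(x^p, a, x^(n-1-p))`. The skew element `sx` is neutral in every position of
`x^(n-1)`, so associativity turns `f(w, x^(n-1))` for the first word `w` of the theorem into `λ i`,
and `f(x^(n-1), w')` for the second word `w'` into `λ (i+j+1)`. Cancelling, both identities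
reduce to `λ` being constant, and `λ 0 = λ 1` is the centralizer condition read the same way.
Bracketing the word `x^(p+r), a, x^(2n-2-p-r)` at positions `0` and `p` gives
`f(λ (p+r), x^(n-1)) = f(x^p, λ r, x^(n-1-p))`; for `r = 0, 1` this propagates `λ 0 = λ 1`
to `λ p = λ (p+1)`. -/

namespace NAry

open Function

variable {G : Type*} {n : ℕ} {f : (ℕ → G) → G}

theorem Solvable.injective_update (hsolv : Solvable n f) {p : ℕ} (hp : p < n) (y : ℕ → G) :
    Injective fun u => f (update y p u) := by
  intro u v huv
  obtain ⟨z, -, huniq⟩ := hsolv p hp y (f (update y p v))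
  exact (huniq u huv).trans (huniq v rfl).symm

theorem Assoc.apply_eq_of_agree (hassoc : Assoc n f) (hdep : DepOn n f) (S : ℕ → G)
    {p q : ℕ} (hp : p < n) (hq : q < n) {u v : G}
    (hu : f (fun m => S (p + m)) = u) (hv : f (fun m => S (q + m)) = v) {y z : ℕ → G}
    (hy : ∀ k < n, y k = if k < p then S k else if k = p then u else S (k + n - 1))
    (hz : ∀ k < n, z k = if k < q then S k else if k = q then v else S (k + n - 1)) :
    f y = f z := by
  subst hu hv
  calc f y = Comp n f S p := hdep _ _ hy
    _ = Comp n f S q := hassoc S p q hp hq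
    _ = f z := (hdep _ _ hz).symm

section Word

variable (hassoc : Assoc n f) (hdep : DepOn n f) (x : G)
include hassoc hdep

theorem apply_update_apply_update {u : G} {s r s' r' : ℕ} (hs : s < n) (hr : r < n)
    (hs' : s' < n) (hr' : r' < n) (h : s + r = s' + r') :
    f (update (fun _ => x) s (f (update (fun _ => x) r u))) =
      f (update (fun _ => x) s' (f (update (fun _ => x) r' u))) := by
  refine hassoc.apply_eq_of_agree hdep (update (fun _ => x) (s + r) u) hs hs'
    (u := f (update (fun _ => x) r u)) (v := f (update (fun _ => x) r' u))
    (hdep _ _ fun m _ => ?_) (hdep _ _ fun m _ => ?_) (fun k _ => ?_) (fun k _ => ?_) <;>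
  (try simp only [update_apply]) <;> split_ifs <;> first | rfl | omega

theorem apply_update_zero_apply_pair {u w : G} {i q : ℕ} (hiq : i < q) (hq : q < n)
    (hw : f (update (fun _ => x) 0 w) = x) :
    f (update (fun _ => x) 0 (f fun m => if m = i then u else if m = q then w else x)) =
      f (update (fun _ => x) i u) := by
  refine hassoc.apply_eq_of_agree hdep (fun m => if m = i then u else if m = q then w else x)
    (p := 0) (by omega) hq (u := f fun m => if m = i then u else if m = q then w else x) (v := x)
    (hdep _ _ fun m _ => ?_) ((hdep _ (update (fun _ => x) 0 w) fun m _ => ?_).trans hw)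
    (fun k _ => ?_) (fun k _ => ?_) <;>
  (try simp only [update_apply]) <;> split_ifs <;> first | rfl | omega

theorem apply_update_last_apply_pair {u w : G} {i q : ℕ} (hiq : i < q) (hq : q < n)
    (hw : f (update (fun _ => x) (n - 1) w) = x) :
    f (update (fun _ => x) (n - 1) (f fun m => if m = i then w else if m = q then u else x)) =
      f (update (fun _ => x) q u) := by
  refine hassoc.apply_eq_of_agree hdep
    (fun m => if m = n - 1 + i then w else if m = n - 1 + q then u else x)
    (p := n - 1) (q := i) (by omega) (by omega)
    (u := f fun m => if m = i then w else if m = q then u else x) (v := x)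
    (hdep _ _ fun m _ => ?_) ((hdep _ (update (fun _ => x) (n - 1) w) fun m _ => ?_).trans hw)
    (fun k _ => ?_) (fun k _ => ?_) <;>
  (try simp only [update_apply]) <;> split_ifs <;> first | rfl | omega

variable (hsolv : Solvable n f)
include hsolv

theorem IsSkew.apply_update {sx : G} (hsx : IsSkew n f x sx) {p : ℕ} (hp : p < n) :
    f (update (fun _ => x) p sx) = x := by
  refine hsolv.injective_update (p := n - 1) (by omega) (fun _ => x) ?_
  dsimp only
  calc f (update (fun _ => x) (n - 1) (f (update (fun _ => x) p sx)))
      = f (update (fun _ => x) p (f (update (fun _ => x) (n - 1) sx))) :=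
        apply_update_apply_update hassoc hdep x (by omega) hp hp (by omega) (by omega)
    _ = f (update (fun _ => x) (n - 1) x) := by rw [hsx, update_eq_self, update_eq_self]

theorem apply_update_eq_apply_update_zero {a : G}
    (h01 : f (update (fun _ => x) 0 a) = f (update (fun _ => x) 1 a)) :
    ∀ p < n, f (update (fun _ => x) p a) = f (update (fun _ => x) 0 a) := by
  intro p hp
  induction p with
  | zero => rfl
  | succ p ih =>
    refine hsolv.injective_update (p := 0) (by omega) (fun _ => x) ?_
    dsimp only
    calc f (update (fun _ => x) 0 (f (update (fun _ => x) (p + 1) a)))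
        = f (update (fun _ => x) p (f (update (fun _ => x) 1 a))) :=
          apply_update_apply_update hassoc hdep x (by omega) hp (by omega) (by omega) (by omega)
      _ = f (update (fun _ => x) 0 (f (update (fun _ => x) p a))) := by
          rw [← h01]
          exact apply_update_apply_update hassoc hdep x (by omega) (by omega) (by omega)
            (by omega) (by omega)
      _ = f (update (fun _ => x) 0 (f (update (fun _ => x) 0 a))) := by rw [ih (by omega)]

end Word

end NAry

open NAry

theorem centralizer_identities {G : Type*} (n : ℕ) (hn : 3 ≤ n) (f : (ℕ → G) → G)
    (hG : IsNAryGroup n f) (x a sx : G) (hs : IsSkew n f x sx)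
    (hx : f (fun k => if k = 1 then a else if k = n - 1 then sx else x) = a)
    (i j k : ℕ) (hijk : i + j + k = n - 2) :
    f (fun m => if m = i then a else if m = i + j + 1 then sx else x) = a ∧
    f (fun m => if m = i then sx else if m = i + j + 1 then a else x) = a := by
  obtain ⟨hdep, hassoc, hsolv⟩ := hG
  have hsx : f (Function.update (fun _ => x) 0 sx) = x :=
    hs.apply_update hassoc hdep x hsolv (by omega)
  have hconst : ∀ p < n,
      f (Function.update (fun _ => x) p a) = f (Function.update (fun _ => x) 0 a) := by
    refine apply_update_eq_apply_update_zero hassoc hdep x hsolv ?_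
    conv_lhs => rw [← hx]
    exact apply_update_zero_apply_pair hassoc hdep x (by omega) (by omega) hsx
  constructor
  · refine hsolv.injective_update (p := 0) (by omega) (fun _ => x) ?_
    dsimp only
    rw [apply_update_zero_apply_pair hassoc hdep x (i := i) (q := i + j + 1) (by omega)
      (by omega) hsx, hconst i (by omega)]
  · refine hsolv.injective_update (p := n - 1) (by omega) (fun _ => x) ?_
    dsimp only
    rw [apply_update_last_apply_pair hassoc hdep x (i := i) (q := i + j + 1) (by omega)
      (by omega) hs, hconst (i + j + 1) (by omega), hconst (n - 1) (by omega)]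
end

section
/- (Maschke's theorem for n-ary groups) Let G be a finite n-ary group and (V,p) a G-module over ℂ. Then every G-submodule W of V has a G-invariant complement: there is a G-submodule U with V = W ⊕ U. -/
open NAry

/-!
Substituting the neutral element `p` into all but the first two places of `f` turns the action
into composition: `y.(x.v)` is the action of `f(y, x, p, …, p)`. Hence the operators `v ↦ x.v`
form a finite set of invertible maps that contains the identity and is closed under composition,
i.e. a finite subgroup of `GL(V)`, and the classical Maschke theorem for that group provides the
invariant complement.
-/

theorem Subgroup.closure_toSubmonoid_of_finite_submonoid {G : Type*} [Group G]
    (S : Submonoid G) [Finite S] : (Subgroup.closure (S : Set G)).toSubmonoid = S := by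
  rw [Subgroup.closure_toSubmonoid_of_isOfFinOrder fun x hx =>
    finite_powers.1 ((Set.toFinite (S : Set G)).subset (Submonoid.powers_le.2 hx)),
    Submonoid.closure_eq]

theorem Subrepresentation.isCompl_toSubmodule {k G V : Type*} [CommSemiring k]
    [Monoid G] [AddCommMonoid V] [Module k V] {ρ : Representation k G V}
    {a b : Subrepresentation ρ} (h : IsCompl a b) : IsCompl a.toSubmodule b.toSubmodule :=
  ⟨disjoint_iff.2 (congrArg Subrepresentation.toSubmodule (disjoint_iff.1 h.1)),
    codisjoint_iff.2 (congrArg Subrepresentation.toSubmodule (codisjoint_iff.1 h.2))⟩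

theorem Submodule.exists_isCompl_of_finite_submonoid_units {k V : Type*} [Field k] [CharZero k]
    [AddCommGroup V] [Module k V] (S : Submonoid (Module.End k V)ˣ) [Finite S]
    (W : Submodule k V) (hW : ∀ g ∈ S, ∀ v ∈ W, (g : Module.End k V) v ∈ W) :
    ∃ U : Submodule k V, (∀ g ∈ S, ∀ v ∈ U, (g : Module.End k V) v ∈ U) ∧ IsCompl W U := by
  set Γ := Subgroup.closure (S : Set (Module.End k V)ˣ)
  have hΓ : ∀ g, g ∈ Γ ↔ g ∈ S := fun g => by
    rw [← Subgroup.mem_toSubmonoid, Subgroup.closure_toSubmonoid_of_finite_submonoid]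
  have : Finite Γ :=
    ((Set.toFinite (S : Set (Module.End k V)ˣ)).subset fun g => (hΓ g).1).to_subtype
  have : NeZero (Nat.card Γ : k) := ⟨Nat.cast_ne_zero.2 Nat.card_pos.ne'⟩
  let ρ : Representation k Γ V := (Units.coeHom _).comp Γ.subtype
  let W' : Subrepresentation ρ := ⟨W, fun g v hv => hW g ((hΓ g).1 g.2) v hv⟩
  obtain ⟨U, hU⟩ := ComplementedLattice.exists_isCompl W'
  exact ⟨U.toSubmodule, fun g hg v hv => U.apply_mem_toSubmodule ⟨g, (hΓ g).2 hg⟩ hv,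
    Subrepresentation.isCompl_toSubmodule hU⟩

namespace NAry

variable {G A : Type*}

def padMul (f : (ℕ → G) → G) (p y x : G) : G :=
  f fun k => if k = 0 then y else if k = 1 then x else p

theorem foldr_range_eq_of_fixed (act : G → A → A) (z : ℕ → G)
    (hz : ∀ i, 2 ≤ i → ∀ a, act (z i) a = a) {m : ℕ} (hm : 2 ≤ m) (a : A) :
    (List.range m).foldr (fun i b => act (z i) b) a = act (z 0) (act (z 1) a) := by
  induction m, hm using Nat.le_induction with
  | base => simp [List.range_succ]
  | succ m hm ih => rw [List.range_succ, List.foldr_append, List.foldr_cons, List.foldr_nil,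
      hz m hm, ih]

theorem IsAction.act_padMul {n : ℕ} (hn : 2 ≤ n) {f : (ℕ → G) → G} {act : G → A → A}
    (h : IsAction n f act) {p : G} (hp : ∀ a, act p a = a) (y x : G) (a : A) :
    act (padMul f p y x) a = act y (act x a) := by
  rw [padMul, h.1, foldr_range_eq_of_fixed _ _ (fun i hi => ?_) hn]
  · simp
  · simpa [show i ≠ 0 by omega, show i ≠ 1 by omega] using hp

end NAry

theorem maschke_nary_general {G : Type*} [Fintype G] (n : ℕ) (hn : 3 ≤ n) (f : (ℕ → G) → G)
    {V : Type*} [AddCommGroup V] [Module ℂ V]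
    (act : G → V →ₗ[ℂ] V)
    (hact : IsAction n f (fun x v => act x v))
    (p : G) (hp : ∀ v : V, act p v = v)
    (W : Submodule ℂ V) (hW : ∀ x : G, ∀ v ∈ W, act x v ∈ W) :
    ∃ U : Submodule ℂ V, (∀ x : G, ∀ v ∈ U, act x v ∈ U) ∧ IsCompl W U := by
  obtain ⟨e, he⟩ : ∃ e : G → (Module.End ℂ V)ˣ, ∀ x, (e x : Module.End ℂ V) = act x :=
    ⟨fun x => ((Module.End.isUnit_iff _).2 (hact.2.2 x)).unit, fun x => IsUnit.unit_spec _⟩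
  let S : Submonoid (Module.End ℂ V)ˣ :=
    { carrier := Set.range e
      mul_mem' := by
        rintro _ _ ⟨y, rfl⟩ ⟨x, rfl⟩
        refine ⟨padMul f p y x, Units.ext (LinearMap.ext fun v => ?_)⟩
        simp [he, hact.act_padMul (by omega) hp]
      one_mem' := ⟨p, Units.ext (LinearMap.ext fun v => by simp [he, hp])⟩ }
  have : Finite S := (Set.finite_range e).to_subtype
  obtain ⟨U, hU, hWU⟩ := Submodule.exists_isCompl_of_finite_submonoid_units S W <| by
    rintro _ ⟨x, rfl⟩ v hv
    exact (he x).symm ▸ hW x v hv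
  exact ⟨U, fun x v hv => he x ▸ hU (e x) ⟨x, rfl⟩ v hv, hWU⟩

theorem maschke_nary {G : Type*} [Fintype G] (n : ℕ) (hn : 3 ≤ n) (f : (ℕ → G) → G)
    (hG : IsNAryGroup n f)
    {V : Type*} [AddCommGroup V] [Module ℂ V] [FiniteDimensional ℂ V]
    (act : G → V →ₗ[ℂ] V)
    (hact : IsAction n f (fun x v => act x v))
    (p : G) (hp : ∀ v : V, act p v = v)
    (W : Submodule ℂ V) (hW : ∀ x : G, ∀ v ∈ W, act x v ∈ W) :
    ∃ U : Submodule ℂ V, (∀ x : G, ∀ v ∈ U, act x v ∈ U) ∧ IsCompl W U :=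
  maschke_nary_general n hn f act hact p hp W hW
end

section
/- Let (G,f) be an n-ary group, e ∈ G, and Γ: Ret_e(G) → GL(V) a group representation. If Γ also satisfies Γ(f(x_1,...,x_n)) = Γ(x_1)⋯Γ(x_n) for all x_i ∈ G, then Γ(x̄) = Γ(x)^{2−n} for every x ∈ G. -/
open NAry

theorem List.prod_map_range_update_const {M : Type*} [Monoid M] (a b : M) (m : ℕ) :
    ((List.range (m + 1)).map (Function.update (fun _ => a) m b)).prod = a ^ m * b := by
  have hinit : (List.range m).map (Function.update (fun _ => a) m b) = List.replicate m a := by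
    rw [List.map_congr_left fun i hi =>
        Function.update_of_ne (List.mem_range.1 hi).ne b (fun _ => a),
      List.map_const', List.length_range]
  rw [List.range_succ, List.map_append, List.prod_append, hinit, List.prod_replicate]
  simp

theorem eq_zpow_one_sub_of_pow_mul_eq {M : Type*} [Group M] {a b : M} {m : ℕ}
    (h : a ^ m * b = a) : b = a ^ (1 - (m : ℤ)) := by
  rw [sub_eq_neg_add, zpow_add, zpow_neg, zpow_one, zpow_natCast, eq_inv_mul_iff_mul_eq, h]

theorem NAry.IsSkew.map_pow_mul_eq {G M : Type*} [Monoid M] {m : ℕ} {f : (ℕ → G) → G}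
    {x sx : G} (hs : IsSkew (m + 1) f x sx) (Γ : G → M)
    (hΓ : ∀ x : ℕ → G, Γ (f x) = ((List.range (m + 1)).map (fun i => Γ (x i))).prod) :
    Γ x ^ m * Γ sx = Γ x := by
  conv_rhs => rw [← hs]
  rw [hΓ, ← List.prod_map_range_update_const]
  simp only [Nat.add_sub_cancel, Function.apply_update (fun _ => Γ)]

theorem rep_skew_pow_general {G : Type*} (n : ℕ) (hn : 3 ≤ n) (f : (ℕ → G) → G)
    {V : Type*} [AddCommGroup V] [Module ℂ V]
    (Γ : G → LinearMap.GeneralLinearGroup ℂ V)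
    (hrep : ∀ x : ℕ → G, Γ (f x) = ((List.range n).map (fun i => Γ (x i))).prod)
    (x sx : G) (hs : IsSkew n f x sx) :
    Γ sx = (Γ x) ^ (2 - (n : ℤ)) := by
  obtain ⟨m, rfl⟩ : ∃ m, n = m + 1 := ⟨n - 1, by omega⟩
  rw [eq_zpow_one_sub_of_pow_mul_eq (hs.map_pow_mul_eq Γ hrep)]
  congr 1
  omega

theorem rep_skew_pow {G : Type*} (n : ℕ) (hn : 3 ≤ n) (f : (ℕ → G) → G)
    (hG : IsNAryGroup n f) (e : G)
    {V : Type*} [AddCommGroup V] [Module ℂ V]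
    (Γ : G → LinearMap.GeneralLinearGroup ℂ V)
    (hhom : ∀ x y : G,
      Γ (f (fun k => if k = 0 then x else if k = n - 1 then y else e)) = Γ x * Γ y)
    (hrep : ∀ x : ℕ → G, Γ (f x) = ((List.range n).map (fun i => Γ (x i))).prod)
    (x sx : G) (hs : IsSkew n f x sx) :
    Γ sx = (Γ x) ^ (2 - (n : ℤ)) :=
  rep_skew_pow_general n hn f Γ hrep x sx hs
end

section
/- Let (G,f) be a ternary group and e ∈ G. A group representation Γ: Ret_e(G) → GL(V) satisfies Γ(f(x,y,z)) = Γ(x)Γ(y)Γ(z) for all x,y,z ∈ G if and only if Γ(x̄) = Γ(x)^{-1} for every x ∈ G. -/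
open NAry

/-!
With `x ∗ y = f(x,e,y)`, associativity gives `f(x,y,z) = x ∗ f(ē,y,ē) ∗ z`. Applying this to
`f(y,y,ȳ) = y` yields `Γ(y) Γ(f(ē,y,ē)) Γ(ȳ) = Γ(y)`, so `Γ(ȳ) = Γ(y)⁻¹` forces
`Γ(f(ē,y,ē)) = Γ(y)`, which makes `Γ` a ternary homomorphism. Conversely, a ternary homomorphism
applied to `f(x,x,x̄) = x` gives `Γ(x) Γ(x̄) = 1`.
-/

namespace NAry

variable {G : Type*} {f : (ℕ → G) → G}

def tern (f : (ℕ → G) → G) (a b c : G) : G :=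
  f (fun k => if k = 0 then a else if k = 1 then b else c)

theorem DepOn.apply_eq_tern (hf : DepOn 3 f) (g : ℕ → G) : f g = tern f (g 0) (g 1) (g 2) :=
  hf _ _ fun k hk => by interval_cases k <;> rfl

theorem DepOn.comp_zero (hf : DepOn 3 f) (x : ℕ → G) :
    Comp 3 f x 0 = tern f (tern f (x 0) (x 1) (x 2)) (x 3) (x 4) := by
  simp [Comp, hf.apply_eq_tern]

theorem DepOn.comp_one (hf : DepOn 3 f) (x : ℕ → G) :
    Comp 3 f x 1 = tern f (x 0) (tern f (x 1) (x 2) (x 3)) (x 4) := by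
  simp [Comp, hf.apply_eq_tern]

theorem DepOn.comp_two (hf : DepOn 3 f) (x : ℕ → G) :
    Comp 3 f x 2 = tern f (x 0) (x 1) (tern f (x 2) (x 3) (x 4)) := by
  simp [Comp, hf.apply_eq_tern]

theorem IsSkew.tern_eq (hf : DepOn 3 f) {x s : G} (h : IsSkew 3 f x s) : tern f x x s = x := by
  rw [IsSkew, hf.apply_eq_tern] at h
  simpa [Function.update] using h

namespace IsNAryGroup

variable (hG : IsNAryGroup 3 f)
include hG

theorem tern_assoc_left (a b c d w : G) :
    tern f (tern f a b c) d w = tern f a (tern f b c d) w := by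
  let x : ℕ → G := fun k =>
    if k = 0 then a else if k = 1 then b else if k = 2 then c else if k = 3 then d else w
  simpa [x, hG.1.comp_zero, hG.1.comp_one] using hG.2.1 x 0 1 (by norm_num) (by norm_num)

theorem tern_assoc_right (a b c d w : G) :
    tern f a (tern f b c d) w = tern f a b (tern f c d w) := by
  let x : ℕ → G := fun k =>
    if k = 0 then a else if k = 1 then b else if k = 2 then c else if k = 3 then d else w
  simpa [x, hG.1.comp_one, hG.1.comp_two] using hG.2.1 x 1 2 (by norm_num) (by norm_num)

theorem tern_assoc (a b c d w : G) :
    tern f (tern f a b c) d w = tern f a b (tern f c d w) := by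
  rw [hG.tern_assoc_left, hG.tern_assoc_right]

theorem exists_tern_eq_left (b c a : G) : ∃ z, tern f z b c = a := by
  obtain ⟨z, hz, -⟩ := hG.2.2 0 (by norm_num) (fun k => if k = 1 then b else c) a
  exact ⟨z, by simpa [hG.1.apply_eq_tern, Function.update] using hz⟩

theorem exists_tern_eq_right (a b c : G) : ∃ z, tern f a b z = c := by
  obtain ⟨z, hz, -⟩ := hG.2.2 2 (by norm_num) (fun k => if k = 0 then a else b) c
  exact ⟨z, by simpa [hG.1.apply_eq_tern, Function.update] using hz⟩

theorem tern_right_injective (a b : G) : Function.Injective (tern f a b) := by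
  intro p q hpq
  obtain ⟨z, -, huniq⟩ := hG.2.2 2 (by norm_num) (fun k => if k = 0 then a else b) (tern f a b q)
  have hupdate (r : G) :
      f (Function.update (fun k => if k = 0 then a else b) 2 r) = tern f a b r := by
    simp [hG.1.apply_eq_tern, Function.update]
  exact (huniq p ((hupdate p).trans hpq)).trans (huniq q (hupdate q)).symm

section Retract

variable {e s : G} (he : IsSkew 3 f e s)
include he

theorem tern_right_skew (a : G) : tern f a e s = a := by
  obtain ⟨b, rfl⟩ := hG.exists_tern_eq_left e e a
  rw [hG.tern_assoc, he.tern_eq hG.1]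

theorem tern_left_skew (a : G) : tern f s e a = a := by
  obtain ⟨v, hv⟩ := hG.exists_tern_eq_left e e e
  have hv_left (a : G) : tern f v e a = a := by
    obtain ⟨c, rfl⟩ := hG.exists_tern_eq_right e e a
    rw [← hG.tern_assoc, hv]
  have hvs : v = s := (hG.tern_right_skew he v).symm.trans (hv_left s)
  exact hvs ▸ hv_left a

theorem tern_skew_middle (a : G) : tern f e s a = a :=
  hG.tern_right_injective e e <| by rw [← hG.tern_assoc_right, he.tern_eq hG.1]

theorem tern_eq_retract (x y z : G) :
    tern f x y z = tern f (tern f x e (tern f s y s)) e z := by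
  rw [← hG.tern_assoc_right, hG.tern_skew_middle he, hG.tern_assoc, hG.tern_left_skew he]

end Retract

end IsNAryGroup

variable {M : Type*} [Group M] {Γ : G → M} {sk : G → G}

theorem map_skew_eq_inv_of_map_tern (hf : DepOn 3 f) (hsk : ∀ x, IsSkew 3 f x (sk x))
    (h : ∀ x y z, Γ (tern f x y z) = Γ x * Γ y * Γ z) (x : G) : Γ (sk x) = (Γ x)⁻¹ := by
  have hx := h x x (sk x)
  rw [(hsk x).tern_eq hf, mul_assoc, left_eq_mul] at hx
  exact eq_inv_of_mul_eq_one_right hx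

theorem IsNAryGroup.map_tern_of_map_skew_eq_inv (hG : IsNAryGroup 3 f) {e : G}
    (hsk : ∀ x, IsSkew 3 f x (sk x)) (hhom : ∀ x y, Γ (tern f x e y) = Γ x * Γ y)
    (h : ∀ x, Γ (sk x) = (Γ x)⁻¹) (x y z : G) : Γ (tern f x y z) = Γ x * Γ y * Γ z := by
  have hmiddle : Γ (tern f (sk e) y (sk e)) = Γ y := by
    have hy := congrArg Γ (hG.tern_eq_retract (hsk e) y y (sk y))
    rw [(hsk y).tern_eq hG.1, hhom, hhom, h, eq_mul_inv_iff_mul_eq, mul_right_inj] at hy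
    exact hy.symm
  rw [hG.tern_eq_retract (hsk e), hhom, hhom, hmiddle]

theorem IsNAryGroup.map_tern_iff_map_skew_eq_inv (hG : IsNAryGroup 3 f) {e : G}
    (hsk : ∀ x, IsSkew 3 f x (sk x)) (hhom : ∀ x y, Γ (tern f x e y) = Γ x * Γ y) :
    (∀ x y z, Γ (tern f x y z) = Γ x * Γ y * Γ z) ↔ ∀ x, Γ (sk x) = (Γ x)⁻¹ :=
  ⟨map_skew_eq_inv_of_map_tern hG.1 hsk, hG.map_tern_of_map_skew_eq_inv hsk hhom⟩

end NAry

theorem ternary_rep_iff {G : Type*} (f : (ℕ → G) → G)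
    (hG : IsNAryGroup 3 f) (e : G) (sk : G → G) (hsk : ∀ x, IsSkew 3 f x (sk x))
    {V : Type*} [AddCommGroup V] [Module ℂ V]
    (Γ : G → LinearMap.GeneralLinearGroup ℂ V)
    (hhom : ∀ x y : G,
      Γ (f (fun k => if k = 0 then x else if k = 2 then y else e)) = Γ x * Γ y) :
    (∀ x y z : G,
        Γ (f (fun k => if k = 0 then x else if k = 1 then y else z)) = Γ x * Γ y * Γ z) ↔
      (∀ x : G, Γ (sk x) = (Γ x)⁻¹) :=
  hG.map_tern_iff_map_skew_eq_inv hsk fun x y => by simpa [hG.1.apply_eq_tern] using hhom x y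
end

section
/- Let H be an n-ary subgroup of an n-ary group (G,f). The relation a ∼_H b ⟺ ∃ x,y ∈ H with b = f(a, x,...,x, y) (n−2 copies of x) is an equivalence relation on G, and a ∼_H b holds if and only if there exist x_2,...,x_n ∈ H with b = f(a, x_2,...,x_n). -/
open NAry

/-!
Write `a·(x, y)` for `f(a, x, …, x, y)` with `n - 2` copies of `x`. Associativity at the first and
last places gives `a·(x, y)·(x', y') = a·(x, y·(x', y'))`, which is transitivity, and
`f(a, x₂, …, xₙ) = a·(h, f(h̄, x₂, …, xₙ))` for any `h`, because `(h, h̄)` is right neutral; this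
rewrites an arbitrary product with factors in `H` into the two-element form. For symmetry, put
`g = f(y, x, …, x)` and `y' = f(x, ḡ, g, …, g, x̄)`: reassociating and the Dörnte identity
`f(g, ḡ, g, …, g, b) = b` give `y·(x, y') = x̄`, hence `a·(x, y)·(x, y') = a·(x, x̄) = a`.
-/

namespace NAry

variable {G : Type*} {n : ℕ} {f : (ℕ → G) → G}

/-- `rightMul n f x y a = f(a, x, …, x, y)` with `n - 2` copies of `x`. -/
def rightMul (n : ℕ) (f : (ℕ → G) → G) (x y a : G) : G :=
  f (fun k => if k = 0 then a else if k = n - 1 then y else x)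

theorem comp_eq (hdep : DepOn n f) {x T : ℕ → G} {i : ℕ} {v : G}
    (hv : f (fun m => x (i + m)) = v)
    (hT : ∀ k < n, T k = if k < i then x k else if k = i then v else x (k + n - 1)) :
    Comp n f x i = f T :=
  hdep _ _ fun k hk => by rw [hT k hk, hv]

/-- `f(f(a, xs₁, …, xs_{n-1}), ys₁, …, ys_{n-1}) = f(a, xs₁, …, xs_{n-2}, f(xs_{n-1}, ys₁, …))`. -/
theorem assoc_first_last (hn : 2 ≤ n) (hG : IsNAryGroup n f) (a : G) (xs ys : ℕ → G) :
    f (fun k => if k = 0 then f (fun j => if j = 0 then a else xs j) else ys k) =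
      f (fun k => if k = 0 then a else
        if k = n - 1 then f (fun j => if j = 0 then xs (n - 1) else ys j) else xs k) := by
  obtain ⟨hdep, hassoc, -⟩ := hG
  set S : ℕ → G := fun k => if k = 0 then a else if k < n then xs k else ys (k + 1 - n) with hS
  refine (comp_eq hdep (i := 0) (v := f (fun j => if j = 0 then a else xs j)) ?_ ?_).symm.trans
    ((hassoc S 0 (n - 1) (by omega) (by omega)).trans
      (comp_eq hdep (v := f (fun j => if j = 0 then xs (n - 1) else ys j)) ?_ ?_))
  all_goals first
    | exact hdep _ _ fun m _ => by
        simp only [hS]; split_ifs <;> first | rfl | omega | (congr 1; omega)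
    | intro k _; simp only [hS]; split_ifs <;> first | rfl | omega | (congr 1; omega)

theorem IsSkew.eq {x sx : G} (h : IsSkew n f x sx) :
    f (fun k => if k = n - 1 then sx else x) = x := by
  refine Eq.trans ?_ h
  congr 1
  funext k
  rw [Function.update_apply]

theorem IsSkew.eq_second (hn : 2 ≤ n) (hG : IsNAryGroup n f) {x sx : G} (hx : IsSkew n f x sx) :
    f (fun k => if k = 1 then sx else x) = x := by
  obtain ⟨hdep, hassoc, hsolv⟩ := hG
  set S : ℕ → G := fun k => if k = n - 1 then sx else x with hS
  have hfirst : Comp n f S 0 = f (fun _ => x) :=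
    comp_eq hdep (by simpa only [zero_add] using hx.eq) fun k _ => by
      simp only [hS]; split_ifs <;> first | rfl | omega
  have hsecond : Comp n f S (n - 2) =
      f (Function.update (fun _ => x) (n - 2) (f (fun k => if k = 1 then sx else x))) :=
    comp_eq hdep (v := f (fun k => if k = 1 then sx else x))
      (hdep _ _ fun m _ => by simp only [hS]; split_ifs <;> first | rfl | omega)
      fun k _ => by simp only [hS, Function.update_apply]; split_ifs <;> first | rfl | omega
  refine (hsolv (n - 2) (by omega) (fun _ => x) (f (fun _ => x))).unique ?_ ?_
  · rw [← hsecond, ← hfirst, hassoc S 0 (n - 2) (by omega) (by omega)]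
  · rw [Function.update_eq_self]

theorem IsSkew.rightMul_eq_self (hn : 2 ≤ n) (hG : IsNAryGroup n f) {x sx : G}
    (hx : IsSkew n f x sx) (a : G) : rightMul n f x sx a = a := by
  obtain ⟨c, hc, -⟩ := hG.2.2 0 (by omega) (fun _ => x) a
  replace hc : f (fun j => if j = 0 then c else x) = a := by
    rw [← hc]; congr 1; funext j; rw [Function.update_apply]
  have hxx : f (fun j => if j = 0 then x else if j = n - 1 then sx else x) = x := by
    refine Eq.trans ?_ hx.eq
    congr 1; funext j; split_ifs <;> first | rfl | omega
  calc rightMul n f x sx a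
      = f (fun k => if k = 0 then c else
          if k = n - 1 then f (fun j => if j = 0 then x else if j = n - 1 then sx else x)
          else x) := by
        rw [rightMul, ← hc]
        exact assoc_first_last hn hG c (fun _ => x) (fun k => if k = n - 1 then sx else x)
    _ = a := by simp only [hxx, ite_self, hc]

theorem rightMul_rightMul (hn : 2 ≤ n) (hG : IsNAryGroup n f) (x y x' y' a : G) :
    rightMul n f x' y' (rightMul n f x y a) = rightMul n f x (rightMul n f x' y' y) a := by
  refine (assoc_first_last hn hG a (fun j => if j = n - 1 then y else x)
    (fun j => if j = n - 1 then y' else x')).trans ?_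
  rw [if_pos rfl]
  congr 1; funext k; split_ifs <;> rfl

theorem f_eq_rightMul (hn : 2 ≤ n) (hG : IsNAryGroup n f) {h sh : G} (hh : IsSkew n f h sh)
    (a : G) (xs : ℕ → G) :
    f (fun k => if k = 0 then a else xs k) =
      rightMul n f h (f (fun j => if j = 0 then sh else xs j)) a := by
  calc f (fun k => if k = 0 then a else xs k)
      = f (fun k => if k = 0 then rightMul n f h sh a else xs k) := by
        rw [hh.rightMul_eq_self hn hG]
    _ = _ := assoc_first_last hn hG a (fun j => if j = n - 1 then sh else h) xs
    _ = _ := by rw [if_pos rfl]; congr 1; funext k; split_ifs <;> rfl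

theorem IsSkew.left_neutral (hn : 3 ≤ n) (hG : IsNAryGroup n f) {g sg : G}
    (hg : IsSkew n f g sg) (b : G) :
    f (fun k => if k = 0 then g else if k = 1 then sg else if k = n - 1 then b else g) = b := by
  obtain ⟨c, hc, -⟩ := hG.2.2 (n - 1) (by omega) (fun _ => g) b
  replace hc : f (fun j => if j = 0 then g else if j = n - 1 then c else g) = b := by
    rw [← hc]; congr 1; funext j; rw [Function.update_apply]; split_ifs <;> first | rfl | omega
  have hgg : f (fun j => if j = 0 then g else if j = 1 then sg else g) = g := by
    refine Eq.trans ?_ (hg.eq_second (by omega) hG)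
    congr 1; funext j; split_ifs <;> first | rfl | omega
  calc f (fun k => if k = 0 then g else if k = 1 then sg else if k = n - 1 then b else g)
      = f (fun k => if k = 0 then g else
          if k = n - 1 then f (fun j => if j = 0 then (if n - 1 = 1 then sg else g) else
            if j = n - 1 then c else g)
          else if k = 1 then sg else g) := by
        rw [if_neg (by omega : n - 1 ≠ 1), hc]
        congr 1; funext k; split_ifs <;> first | rfl | omega
    _ = f (fun k => if k = 0 then f (fun j => if j = 0 then g else if j = 1 then sg else g)
          else if k = n - 1 then c else g) :=
        (assoc_first_last (by omega) hG g _ _).symm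
    _ = b := by rw [hgg, hc]

theorem IsSkew.rightMul_eq (hn : 3 ≤ n) (hG : IsNAryGroup n f) {h y g sg : G}
    (hyg : f (fun k => if k = 0 then y else h) = g) (hg : IsSkew n f g sg) (b : G) :
    rightMul n f h
      (f (fun j => if j = 0 then h else if j = 1 then sg else if j = n - 1 then b else g)) y =
      b := by
  refine (assoc_first_last (by omega) hG y (fun _ => h) _).symm.trans ?_
  rw [hyg]
  exact hg.left_neutral hn hG b

abbrev CosetRel (n : ℕ) (f : (ℕ → G) → G) (H : Set G) (a b : G) : Prop :=
  ∃ x ∈ H, ∃ y ∈ H, b = rightMul n f x y a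

section CosetRel

variable {sk : G → G} {H : Set G}

theorem rightMul_mem (hcl : ∀ x : ℕ → G, (∀ k < n, x k ∈ H) → f x ∈ H) {x y a : G}
    (hx : x ∈ H) (hy : y ∈ H) (ha : a ∈ H) : rightMul n f x y a ∈ H :=
  hcl _ fun k _ => by split_ifs <;> assumption

theorem cosetRel_refl (hn : 2 ≤ n) (hG : IsNAryGroup n f) (hsk : ∀ x, IsSkew n f x (sk x))
    (hskH : ∀ x ∈ H, sk x ∈ H) (hne : H.Nonempty) (a : G) : CosetRel n f H a a :=
  let ⟨h, hh⟩ := hne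
  ⟨h, hh, sk h, hskH h hh, ((hsk h).rightMul_eq_self hn hG a).symm⟩

theorem cosetRel_symm (hn : 3 ≤ n) (hG : IsNAryGroup n f) (hsk : ∀ x, IsSkew n f x (sk x))
    (hcl : ∀ x : ℕ → G, (∀ k < n, x k ∈ H) → f x ∈ H) (hskH : ∀ x ∈ H, sk x ∈ H) {a b : G}
    (hab : CosetRel n f H a b) : CosetRel n f H b a := by
  obtain ⟨x, hx, y, hy, rfl⟩ := hab
  set g := f (fun k => if k = 0 then y else x) with hg
  have hgH : g ∈ H := hcl _ fun k _ => by split_ifs <;> assumption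
  have hsgH := hskH g hgH
  have hsxH := hskH x hx
  refine ⟨x, hx,
    f (fun j => if j = 0 then x else if j = 1 then sk g else if j = n - 1 then sk x else g),
    hcl _ fun k _ => ?_, ?_⟩
  · split_ifs <;> assumption
  · rw [rightMul_rightMul (by omega) hG, (hsk g).rightMul_eq hn hG hg.symm,
      (hsk x).rightMul_eq_self (by omega) hG]

theorem cosetRel_trans (hn : 2 ≤ n) (hG : IsNAryGroup n f)
    (hcl : ∀ x : ℕ → G, (∀ k < n, x k ∈ H) → f x ∈ H) {a b c : G}
    (hab : CosetRel n f H a b) (hbc : CosetRel n f H b c) : CosetRel n f H a c := by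
  obtain ⟨x, hx, y, hy, rfl⟩ := hab
  obtain ⟨x', hx', y', hy', rfl⟩ := hbc
  exact ⟨x, hx, _, rightMul_mem hcl hx' hy' hy, rightMul_rightMul hn hG x y x' y' a⟩

theorem cosetRel_iff (hn : 2 ≤ n) (hG : IsNAryGroup n f) (hsk : ∀ x, IsSkew n f x (sk x))
    (hcl : ∀ x : ℕ → G, (∀ k < n, x k ∈ H) → f x ∈ H) (hskH : ∀ x ∈ H, sk x ∈ H)
    (hne : H.Nonempty) {a b : G} :
    CosetRel n f H a b ↔
      ∃ x : ℕ → G, (∀ k, 1 ≤ k → k < n → x k ∈ H) ∧ b = f (Function.update x 0 a) := by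
  constructor
  · rintro ⟨x, hx, y, hy, rfl⟩
    refine ⟨fun k => if k = n - 1 then y else x, fun k _ _ => ?_, ?_⟩
    · dsimp only; split_ifs <;> assumption
    · rw [rightMul]; congr 1; funext k; rw [Function.update_apply]
  · rintro ⟨xs, hxs, rfl⟩
    obtain ⟨h, hh⟩ := hne
    refine ⟨h, hh, f (fun j => if j = 0 then sk h else xs j), hcl _ fun k hk => ?_, ?_⟩
    · split_ifs with hk0
      exacts [hskH h hh, hxs k (by omega) hk]
    · rw [← f_eq_rightMul hn hG (hsk h)]
      congr 1; funext k; rw [Function.update_apply]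

end CosetRel

end NAry

theorem coset_relation_equivalence {G : Type*} (n : ℕ) (hn : 3 ≤ n) (f : (ℕ → G) → G)
    (hG : IsNAryGroup n f) (sk : G → G) (hsk : ∀ x, IsSkew n f x (sk x))
    (H : Set G) (hne : H.Nonempty)
    (hcl : ∀ x : ℕ → G, (∀ k < n, x k ∈ H) → f x ∈ H)
    (hskH : ∀ x ∈ H, sk x ∈ H) :
    let R : G → G → Prop := fun a b =>
      ∃ x ∈ H, ∃ y ∈ H, b = f (fun k => if k = 0 then a else if k = n - 1 then y else x)
    Equivalence R ∧
      ∀ a b : G, R a b ↔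
        ∃ x : ℕ → G, (∀ k, 1 ≤ k → k < n → x k ∈ H) ∧ b = f (Function.update x 0 a) := by
  intro R
  have hn2 : 2 ≤ n := by omega
  exact ⟨⟨cosetRel_refl hn2 hG hsk hskH hne, cosetRel_symm hn hG hsk hcl hskH,
    cosetRel_trans hn2 hG hcl⟩, fun a b => cosetRel_iff hn2 hG hsk hcl hskH hne⟩
end
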